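/- arXiv:2407.05514 — 6 statements merged into one kernel-verified Lean document; each statement's English description precedes it below -/
import Mathlib

section
/- Let f be a Schwartz function on R^d such that all moments of order up to N-1 vanish, i.e., ∫ x_{ℓ1}⋯x_{ℓ_{N-1}} f(x) dx = 0 for all choices of indices. Then there exists a constant C_f > 0 such that for all x, y ∈ R^d, |f̂(x+y) − f̂(x)| ≤ C_f ( min(|x|^{N-1}|y|, 1) + min(|y|^N, 1) ), where f̂(x) = ∫_{R^d} f(u) e^{−i x·u} du. -/
open MeasureTheory Real Filter Set

/-- The Fourier transform `f̂(x) = ∫ f(u) e^{-i x·u} du` on `ℝ^d`. -/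
noncomputable def fourierT (d : ℕ) (f : EuclideanSpace ℝ (Fin d) → ℂ)
    (x : EuclideanSpace ℝ (Fin d)) : ℂ :=
  ∫ u : EuclideanSpace ℝ (Fin d), Complex.exp (-Complex.I * ((inner ℝ x u : ℝ) : ℂ)) * f u

lemma expTaylorBound (n : ℕ) (t : ℝ) :
    ‖Complex.exp (t * Complex.I) - ∑ k ∈ Finset.range n, (t * Complex.I) ^ k / (Nat.factorial k : ℂ)‖ ≤ |t| ^ n := by
  induction n generalizing t with
  | zero => simp [Complex.norm_exp_ofReal_mul_I]
  | succ n ih =>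
    set F : ℝ → ℂ := fun s => Complex.exp (s * Complex.I) - ∑ k ∈ Finset.range (n+1), (s * Complex.I) ^ k / (Nat.factorial k : ℂ) with hF
    have hderiv : ∀ s : ℝ, HasDerivAt F
        (Complex.I * (Complex.exp (s * Complex.I) - ∑ k ∈ Finset.range n, (s * Complex.I) ^ k / (Nat.factorial k : ℂ))) s := by
      intro s
      have h1 : HasDerivAt (fun s : ℝ => Complex.exp (s * Complex.I)) (Complex.I * Complex.exp (s * Complex.I)) s := by
        have : HasDerivAt (fun z : ℂ => Complex.exp (z * Complex.I)) (Complex.I * Complex.exp (s * Complex.I)) (s : ℂ) := by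
          have := ((hasDerivAt_id (s : ℂ)).mul_const Complex.I).cexp
          simpa [mul_comm] using this
        exact this.comp_ofReal
      have h2 : ∀ k : ℕ, HasDerivAt (fun s : ℝ => (s * Complex.I) ^ k / (Nat.factorial k : ℂ))
          ((k : ℂ) * ((s : ℂ) * Complex.I) ^ (k - 1) * Complex.I / (Nat.factorial k : ℂ)) s := by
        intro k
        have : HasDerivAt (fun z : ℂ => (z * Complex.I) ^ k / (Nat.factorial k : ℂ))
            ((k : ℂ) * ((s : ℂ) * Complex.I) ^ (k - 1) * Complex.I / (Nat.factorial k : ℂ)) (s : ℂ) := by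
          simpa using (((hasDerivAt_id (s : ℂ)).mul_const Complex.I).pow k).div_const ((Nat.factorial k : ℂ))
        exact this.comp_ofReal
      have hsum : HasDerivAt (fun s : ℝ => ∑ k ∈ Finset.range (n+1), (s * Complex.I) ^ k / (Nat.factorial k : ℂ))
          (∑ k ∈ Finset.range (n+1), (k : ℂ) * ((s : ℂ) * Complex.I) ^ (k - 1) * Complex.I / (Nat.factorial k : ℂ)) s :=
        HasDerivAt.fun_sum (fun k _ => h2 k)
      have heq : (∑ k ∈ Finset.range (n+1), (k : ℂ) * ((s : ℂ) * Complex.I) ^ (k - 1) * Complex.I / (Nat.factorial k : ℂ))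
          = Complex.I * ∑ k ∈ Finset.range n, ((s : ℂ) * Complex.I) ^ k / (Nat.factorial k : ℂ) := by
        rw [Finset.sum_range_succ']
        simp only [Nat.cast_zero, pow_zero, Nat.factorial_zero, Nat.cast_one, zero_mul, mul_zero,
          zero_div, add_zero]
        rw [Finset.mul_sum]
        refine Finset.sum_congr rfl fun k _ => ?_
        have hk : ((k + 1 : ℕ) : ℂ) ≠ 0 := Nat.cast_ne_zero.mpr (Nat.succ_ne_zero k)
        rw [Nat.factorial_succ, Nat.cast_mul, Nat.add_sub_cancel, mul_assoc,
          mul_div_mul_left _ _ hk]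
        ring
      have := h1.sub hsum
      rw [heq] at this
      rw [mul_sub]
      exact this
    have key := (convex_uIcc (0:ℝ) t).norm_image_sub_le_of_norm_hasDerivWithin_le
      (f := F) (C := |t| ^ n)
      (fun s _ => (hderiv s).hasDerivWithinAt)
      (fun s hs => by
        rw [norm_mul, Complex.norm_I, one_mul]
        refine (ih s).trans ?_
        have : |s| ≤ |t| := by
          rcases Set.mem_uIcc.mp hs with ⟨h1, h2⟩ | ⟨h1, h2⟩ <;>
            rw [abs_le] <;> constructor <;> nlinarith [abs_nonneg t, le_abs_self t, neg_abs_le t]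
        exact pow_le_pow_left₀ (abs_nonneg s) this n)
      Set.left_mem_uIcc Set.right_mem_uIcc
    have hF0 : F 0 = 0 := by
      simp only [hF, Complex.ofReal_zero, zero_mul, Complex.exp_zero]
      rw [Finset.sum_eq_single 0]
      · norm_num
      · intro k _ hk
        simp [zero_pow hk]
      · simp
    rw [hF0, sub_zero, sub_zero] at key
    calc ‖F t‖ ≤ |t| ^ n * ‖t‖ := key
      _ = |t| ^ (n + 1) := by rw [Real.norm_eq_abs, pow_succ]

lemma coord_le_norm {d : ℕ} (u : EuclideanSpace ℝ (Fin d)) (i : Fin d) : |u i| ≤ ‖u‖ := by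
  rw [EuclideanSpace.norm_eq, ← Real.sqrt_sq_eq_abs]
  apply Real.sqrt_le_sqrt
  calc u i ^ 2 = ‖u i‖ ^ 2 := by rw [Real.norm_eq_abs, sq_abs]
    _ ≤ ∑ j, ‖u j‖ ^ 2 := Finset.single_le_sum (f := fun j => ‖u j‖ ^ 2)
        (fun j _ => sq_nonneg _) (Finset.mem_univ i)

lemma monom_integrable {d : ℕ} (f : SchwartzMap (EuclideanSpace ℝ (Fin d)) ℂ)
    {m : ℕ} (ℓ : Fin m → Fin d) :
    Integrable (fun u : EuclideanSpace ℝ (Fin d) => (∏ i, (u (ℓ i) : ℂ)) * f u) := by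
  refine (f.integrable_pow_mul volume m).mono' ?_ ?_
  · apply Continuous.aestronglyMeasurable
    refine Continuous.mul ?_ f.continuous
    refine continuous_finset_prod _ fun i _ => ?_
    exact Complex.continuous_ofReal.comp (EuclideanSpace.proj (𝕜 := ℝ) (ℓ i)).continuous
  · refine Eventually.of_forall fun u => ?_
    rw [norm_mul]
    gcongr
    rw [norm_prod]
    calc ∏ i, ‖((u (ℓ i) : ℝ) : ℂ)‖ = ∏ i : Fin m, |u (ℓ i)| := by
          simp [Complex.norm_real]
      _ ≤ ∏ i : Fin m, ‖u‖ := Finset.prod_le_prod (fun i _ => abs_nonneg _)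
          (fun i _ => coord_le_norm u (ℓ i))
      _ = ‖u‖ ^ m := by simp

lemma moment_vanish {d N : ℕ} (hN : 1 ≤ N)
    (f : SchwartzMap (EuclideanSpace ℝ (Fin d)) ℂ)
    (hmom : ∀ j : ℕ, 1 ≤ j → j ≤ N - 1 → ∀ ℓ : Fin j → Fin d,
      ∫ u : EuclideanSpace ℝ (Fin d), (∏ i, (u (ℓ i) : ℂ)) * f u = 0)
    {m : ℕ} (hm1 : 1 ≤ m) (hm2 : m < N) (c : Fin m → EuclideanSpace ℝ (Fin d)) :
    ∫ u : EuclideanSpace ℝ (Fin d), (∏ i, ((inner ℝ (c i) u : ℝ) : ℂ)) * f u = 0 := by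
  have hpt : ∀ u : EuclideanSpace ℝ (Fin d),
      (∏ i, ((inner ℝ (c i) u : ℝ) : ℂ)) * f u
      = ∑ ℓ ∈ Fintype.piFinset (fun _ : Fin m => (Finset.univ : Finset (Fin d))),
          (∏ i, (c i (ℓ i) : ℂ)) * ((∏ i, (u (ℓ i) : ℂ)) * f u) := by
    intro u
    have h1 : (∏ i, ((inner ℝ (c i) u : ℝ) : ℂ))
        = ∑ ℓ ∈ Fintype.piFinset (fun _ : Fin m => (Finset.univ : Finset (Fin d))),
            ∏ i, ((c i (ℓ i) : ℂ) * (u (ℓ i) : ℂ)) := by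
      rw [← Finset.prod_univ_sum (fun _ : Fin m => (Finset.univ : Finset (Fin d)))
        (fun i l => (c i l : ℂ) * (u l : ℂ))]
      refine Finset.prod_congr rfl fun i _ => ?_
      rw [PiLp.inner_apply]
      push_cast
      refine Finset.sum_congr rfl fun l _ => ?_
      rw [RCLike.inner_apply, conj_trivial]
      push_cast
      ring
    rw [h1, Finset.sum_mul]
    refine Finset.sum_congr rfl fun ℓ _ => ?_
    rw [Finset.prod_mul_distrib, mul_assoc]
  calc (∫ u : EuclideanSpace ℝ (Fin d), (∏ i, ((inner ℝ (c i) u : ℝ) : ℂ)) * f u)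
      = ∫ u : EuclideanSpace ℝ (Fin d),
          ∑ ℓ ∈ Fintype.piFinset (fun _ : Fin m => (Finset.univ : Finset (Fin d))),
          (∏ i, (c i (ℓ i) : ℂ)) * ((∏ i, (u (ℓ i) : ℂ)) * f u) := by
        congr 1; funext u; exact hpt u
    _ = ∑ ℓ ∈ Fintype.piFinset (fun _ : Fin m => (Finset.univ : Finset (Fin d))),
          ∫ u : EuclideanSpace ℝ (Fin d), (∏ i, (c i (ℓ i) : ℂ)) * ((∏ i, (u (ℓ i) : ℂ)) * f u) :=
        integral_finset_sum _ (fun ℓ _ => (monom_integrable f ℓ).const_mul _)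
    _ = 0 := by
        refine Finset.sum_eq_zero fun ℓ _ => ?_
        rw [MeasureTheory.integral_const_mul, hmom m hm1 (Nat.le_sub_one_of_lt hm2) ℓ, mul_zero]

lemma moment_pow_vanish {d N : ℕ} (hN : 1 ≤ N)
    (f : SchwartzMap (EuclideanSpace ℝ (Fin d)) ℂ)
    (hmom : ∀ j : ℕ, 1 ≤ j → j ≤ N - 1 → ∀ ℓ : Fin j → Fin d,
      ∫ u : EuclideanSpace ℝ (Fin d), (∏ i, (u (ℓ i) : ℂ)) * f u = 0)
    (k j : ℕ) (hj : 1 ≤ j) (hkj : k + j < N) (x y : EuclideanSpace ℝ (Fin d)) :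
    ∫ u : EuclideanSpace ℝ (Fin d),
      ((inner ℝ x u : ℝ) : ℂ) ^ k * ((inner ℝ y u : ℝ) : ℂ) ^ j * f u = 0 := by
  have h := moment_vanish hN f hmom (m := k + j) (by omega) hkj
    (Fin.append (fun _ : Fin k => x) (fun _ : Fin j => y))
  calc (∫ u : EuclideanSpace ℝ (Fin d),
        ((inner ℝ x u : ℝ) : ℂ) ^ k * ((inner ℝ y u : ℝ) : ℂ) ^ j * f u)
      = ∫ u : EuclideanSpace ℝ (Fin d),
          (∏ i : Fin (k + j),
            ((inner ℝ (Fin.append (fun _ : Fin k => x) (fun _ : Fin j => y) i) u : ℝ) : ℂ)) * f u := by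
        congr 1; funext u; congr 1
        rw [Fin.prod_univ_add]
        simp [Fin.append_left, Fin.append_right]
    _ = 0 := h

lemma powmom_integrable {d : ℕ} (f : SchwartzMap (EuclideanSpace ℝ (Fin d)) ℂ)
    (x y : EuclideanSpace ℝ (Fin d)) (k j : ℕ) :
    Integrable (fun u : EuclideanSpace ℝ (Fin d) =>
      ((inner ℝ x u : ℝ) : ℂ) ^ k * ((inner ℝ y u : ℝ) : ℂ) ^ j * f u) := by
  refine ((f.integrable_pow_mul volume (k + j)).const_mul (‖x‖ ^ k * ‖y‖ ^ j)).mono' ?_ ?_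
  · apply Continuous.aestronglyMeasurable
    refine Continuous.mul (Continuous.mul ?_ ?_) f.continuous
    · exact (Complex.continuous_ofReal.comp ((continuous_const (y := x)).inner continuous_id)).pow k
    · exact (Complex.continuous_ofReal.comp ((continuous_const (y := y)).inner continuous_id)).pow j
  · refine Eventually.of_forall fun u => ?_
    rw [norm_mul, norm_mul, norm_pow, norm_pow, Complex.norm_real, Complex.norm_real,
      Real.norm_eq_abs, Real.norm_eq_abs]
    have h1 : |(inner ℝ x u : ℝ)| ≤ ‖x‖ * ‖u‖ := abs_real_inner_le_norm x u
    have h2 : |(inner ℝ y u : ℝ)| ≤ ‖y‖ * ‖u‖ := abs_real_inner_le_norm y u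
    calc |(inner ℝ x u : ℝ)| ^ k * |(inner ℝ y u : ℝ)| ^ j * ‖f u‖
        ≤ (‖x‖ * ‖u‖) ^ k * ((‖y‖ * ‖u‖) ^ j) * ‖f u‖ := by
          gcongr <;> positivity
      _ = ‖x‖ ^ k * ‖y‖ ^ j * (‖u‖ ^ (k + j) * ‖f u‖) := by
          rw [mul_pow, mul_pow, pow_add]; ring

lemma pointwise_bound (N : ℕ) (hN : 1 ≤ N) (s t : ℝ) :
    ‖(Complex.exp (-Complex.I * ((s + t : ℝ) : ℂ)) - Complex.exp (-Complex.I * ((s : ℝ) : ℂ)))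
      - ∑ j ∈ Finset.Ico 1 N, ((-Complex.I * (t : ℂ)) ^ j / (Nat.factorial j : ℂ)) *
          (∑ k ∈ Finset.range (N - j), (-Complex.I * (s : ℂ)) ^ k / (Nat.factorial k : ℂ))‖
    ≤ (∑ j ∈ Finset.Ico 1 N, |t| ^ j * |s| ^ (N - j)) + |t| ^ N := by
  have hmun : ∀ r : ℝ, -Complex.I * (r : ℂ) = ((-r : ℝ) : ℂ) * Complex.I := by
    intro r; push_cast; ring
  set A := Complex.exp (-Complex.I * (s : ℂ)) with hA
  set R := Complex.exp (-Complex.I * (t : ℂ))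
      - ∑ k ∈ Finset.range N, (-Complex.I * (t : ℂ)) ^ k / (Nat.factorial k : ℂ) with hR
  have hRnorm : ‖R‖ ≤ |t| ^ N := by
    rw [hR, hmun t]
    simpa [abs_neg] using expTaylorBound N (-t)
  have hQ : ∀ j : ℕ, ‖A - ∑ k ∈ Finset.range (N - j), (-Complex.I * (s : ℂ)) ^ k / (Nat.factorial k : ℂ)‖
      ≤ |s| ^ (N - j) := by
    intro j
    rw [hA, hmun s]
    simpa [abs_neg] using expTaylorBound (N - j) (-s)
  have hAnorm : ‖A‖ = 1 := by
    rw [hA, hmun s, Complex.norm_exp_ofReal_mul_I]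
  have ht : Complex.exp (-Complex.I * (t : ℂ))
      = 1 + (∑ j ∈ Finset.Ico 1 N, (-Complex.I * (t : ℂ)) ^ j / (Nat.factorial j : ℂ)) + R := by
    have h0 : ∑ k ∈ Finset.range N, (-Complex.I * (t : ℂ)) ^ k / (Nat.factorial k : ℂ)
        = 1 + ∑ j ∈ Finset.Ico 1 N, (-Complex.I * (t : ℂ)) ^ j / (Nat.factorial j : ℂ) := by
      rw [Finset.range_eq_Ico, Finset.sum_eq_sum_Ico_succ_bot hN]
      norm_num
    rw [hR, h0]; ring
  have hsplit : Complex.exp (-Complex.I * ((s + t : ℝ) : ℂ)) = A * Complex.exp (-Complex.I * (t : ℂ)) := by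
    rw [hA, ← Complex.exp_add]; congr 1; push_cast; ring
  have hident : (Complex.exp (-Complex.I * ((s + t : ℝ) : ℂ)) - A)
      - ∑ j ∈ Finset.Ico 1 N, ((-Complex.I * (t : ℂ)) ^ j / (Nat.factorial j : ℂ)) *
          (∑ k ∈ Finset.range (N - j), (-Complex.I * (s : ℂ)) ^ k / (Nat.factorial k : ℂ))
      = (∑ j ∈ Finset.Ico 1 N, ((-Complex.I * (t : ℂ)) ^ j / (Nat.factorial j : ℂ)) *
          (A - ∑ k ∈ Finset.range (N - j), (-Complex.I * (s : ℂ)) ^ k / (Nat.factorial k : ℂ)))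
        + A * R := by
    rw [hsplit, ht]
    simp only [mul_sub, Finset.sum_sub_distrib, ← Finset.sum_mul]
    ring
  rw [hident]
  refine (norm_add_le _ _).trans ?_
  gcongr
  · refine (norm_sum_le _ _).trans ?_
    refine Finset.sum_le_sum fun j hj => ?_
    rw [norm_mul]
    have h1 : ‖(-Complex.I * (t : ℂ)) ^ j / (Nat.factorial j : ℂ)‖ ≤ |t| ^ j := by
      rw [norm_div, norm_pow, norm_mul, norm_neg, Complex.norm_I, one_mul, Complex.norm_real,
        Real.norm_eq_abs, Complex.norm_natCast]
      exact div_le_self (pow_nonneg (abs_nonneg _) _) (by exact_mod_cast j.factorial_pos)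
    exact mul_le_mul h1 (hQ j) (norm_nonneg _) (pow_nonneg (abs_nonneg _) _)
  · rw [norm_mul, hAnorm, one_mul]
    exact hRnorm

/-- If `f` is Schwartz on `ℝ^d` with all moments of order `1 ≤ j ≤ N-1` vanishing, then
`|f̂(x+y) - f̂(x)| ≤ C (min(|x|^{N-1}|y|, 1) + min(|y|^N, 1))`. -/
theorem statement0 (d N : ℕ) (hd : 1 ≤ d) (hN : 1 ≤ N)
    (f : SchwartzMap (EuclideanSpace ℝ (Fin d)) ℂ)
    (hmom : ∀ j : ℕ, 1 ≤ j → j ≤ N - 1 → ∀ ℓ : Fin j → Fin d,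
      ∫ u : EuclideanSpace ℝ (Fin d), (∏ i, (u (ℓ i) : ℂ)) * f u = 0) :
    ∃ C > (0:ℝ), ∀ x y : EuclideanSpace ℝ (Fin d),
      ‖fourierT d f (x + y) - fourierT d f x‖ ≤
        C * (min (‖x‖ ^ (N - 1) * ‖y‖) 1 + min (‖y‖ ^ N) 1) := by
  set M0 : ℝ := ∫ u : EuclideanSpace ℝ (Fin d), ‖f u‖ with hM0def
  set MN : ℝ := ∫ u : EuclideanSpace ℝ (Fin d), ‖u‖ ^ N * ‖f u‖ with hMNdef
  have hM0 : 0 ≤ M0 := integral_nonneg fun u => norm_nonneg _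
  have hMN : 0 ≤ MN := integral_nonneg fun u => by positivity
  have hNMN : (0:ℝ) ≤ N * MN := mul_nonneg (Nat.cast_nonneg N) hMN
  refine ⟨N * MN + 2 * M0 + 1, by linarith, fun x y => ?_⟩
  set C : ℝ := N * MN + 2 * M0 + 1 with hCdef
  have hC0 : (0:ℝ) < C := by simp only [hCdef]; linarith
  -- integrability of the exponential integrands
  have hnorm1 : ∀ (z u : EuclideanSpace ℝ (Fin d)),
      ‖Complex.exp (-Complex.I * ((inner ℝ z u : ℝ) : ℂ))‖ = 1 := by
    intro z u
    rw [show -Complex.I * ((inner ℝ z u : ℝ) : ℂ) = ((-(inner ℝ z u : ℝ) : ℝ) : ℂ) * Complex.I by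
      push_cast; ring, Complex.norm_exp_ofReal_mul_I]
  have hexp_int : ∀ z : EuclideanSpace ℝ (Fin d),
      Integrable (fun u : EuclideanSpace ℝ (Fin d) =>
        Complex.exp (-Complex.I * ((inner ℝ z u : ℝ) : ℂ)) * f u) := by
    intro z
    refine ((f.integrable (μ := volume)).norm).mono' ?_ ?_
    · apply Continuous.aestronglyMeasurable
      refine Continuous.mul ?_ f.continuous
      exact Complex.continuous_exp.comp (continuous_const.mul
        (Complex.continuous_ofReal.comp ((continuous_const (y := z)).inner continuous_id)))
    · refine Eventually.of_forall fun u => ?_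
      rw [norm_mul, hnorm1 z u, one_mul]
  -- the difference as a single integral
  have hsub : fourierT d f (x + y) - fourierT d f x
      = ∫ u : EuclideanSpace ℝ (Fin d),
          (Complex.exp (-Complex.I * ((inner ℝ (x + y) u : ℝ) : ℂ))
            - Complex.exp (-Complex.I * ((inner ℝ x u : ℝ) : ℂ))) * f u := by
    rw [fourierT, fourierT, ← integral_sub (hexp_int (x + y)) (hexp_int x)]
    congr 1; funext u; rw [sub_mul]
  -- the Taylor polynomial
  set T : EuclideanSpace ℝ (Fin d) → ℂ := fun u =>
    ∑ j ∈ Finset.Ico 1 N, ((-Complex.I * ((inner ℝ y u : ℝ) : ℂ)) ^ j / (Nat.factorial j : ℂ)) *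
      (∑ k ∈ Finset.range (N - j), (-Complex.I * ((inner ℝ x u : ℝ) : ℂ)) ^ k / (Nat.factorial k : ℂ))
    with hTdef
  have hT_eq : (fun u : EuclideanSpace ℝ (Fin d) => T u * f u)
      = fun u => ∑ j ∈ Finset.Ico 1 N, ∑ k ∈ Finset.range (N - j),
          (((-Complex.I) ^ j * (-Complex.I) ^ k) / ((Nat.factorial j : ℂ) * (Nat.factorial k : ℂ)))
            * (((inner ℝ x u : ℝ) : ℂ) ^ k * ((inner ℝ y u : ℝ) : ℂ) ^ j * f u) := by
    funext u
    rw [hTdef, Finset.sum_mul]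
    refine Finset.sum_congr rfl fun j _ => ?_
    rw [Finset.mul_sum, Finset.sum_mul]
    refine Finset.sum_congr rfl fun k _ => ?_
    ring
  have hTf_int : Integrable (fun u : EuclideanSpace ℝ (Fin d) => T u * f u) := by
    rw [hT_eq]
    exact integrable_finset_sum _ (fun j _ => integrable_finset_sum _
      (fun k _ => (powmom_integrable f x y k j).const_mul _))
  have hTf0 : (∫ u : EuclideanSpace ℝ (Fin d), T u * f u) = 0 := by
    rw [hT_eq, integral_finset_sum _ (fun j _ => integrable_finset_sum _
      (fun k _ => (powmom_integrable f x y k j).const_mul _))]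
    refine Finset.sum_eq_zero fun j hj => ?_
    rw [integral_finset_sum _ (fun k _ => (powmom_integrable f x y k j).const_mul _)]
    refine Finset.sum_eq_zero fun k hk => ?_
    obtain ⟨hj1, hj2⟩ := Finset.mem_Ico.mp hj
    have hk' := Finset.mem_range.mp hk
    rw [MeasureTheory.integral_const_mul,
      moment_pow_vanish hN f hmom k j hj1 (by omega) x y, mul_zero]
  have hgf_int : Integrable (fun u : EuclideanSpace ℝ (Fin d) =>
      (Complex.exp (-Complex.I * ((inner ℝ (x + y) u : ℝ) : ℂ))
        - Complex.exp (-Complex.I * ((inner ℝ x u : ℝ) : ℂ))) * f u) := by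
    rw [show (fun u : EuclideanSpace ℝ (Fin d) =>
        (Complex.exp (-Complex.I * ((inner ℝ (x + y) u : ℝ) : ℂ))
          - Complex.exp (-Complex.I * ((inner ℝ x u : ℝ) : ℂ))) * f u)
      = fun u => Complex.exp (-Complex.I * ((inner ℝ (x + y) u : ℝ) : ℂ)) * f u
          - Complex.exp (-Complex.I * ((inner ℝ x u : ℝ) : ℂ)) * f u from
      funext fun u => sub_mul _ _ _]
    exact (hexp_int (x + y)).sub (hexp_int x)
  set a : ℝ := ‖x‖ ^ (N - 1) * ‖y‖ with hadef
  set b : ℝ := ‖y‖ ^ N with hbdef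
  have ha0 : 0 ≤ a := by positivity
  have hb0 : 0 ≤ b := by positivity
  set B : ℝ := (∑ j ∈ Finset.Ico 1 N, ‖y‖ ^ j * ‖x‖ ^ (N - j)) + ‖y‖ ^ N with hBdef
  -- main estimate
  have hmain : ‖fourierT d f (x + y) - fourierT d f x‖ ≤ B * MN := by
    rw [hsub]
    have key : (∫ u : EuclideanSpace ℝ (Fin d),
        (Complex.exp (-Complex.I * ((inner ℝ (x + y) u : ℝ) : ℂ))
          - Complex.exp (-Complex.I * ((inner ℝ x u : ℝ) : ℂ))) * f u)
        = ∫ u : EuclideanSpace ℝ (Fin d),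
        ((Complex.exp (-Complex.I * ((inner ℝ (x + y) u : ℝ) : ℂ))
          - Complex.exp (-Complex.I * ((inner ℝ x u : ℝ) : ℂ))) - T u) * f u := by
      rw [show (fun u : EuclideanSpace ℝ (Fin d) =>
          ((Complex.exp (-Complex.I * ((inner ℝ (x + y) u : ℝ) : ℂ))
            - Complex.exp (-Complex.I * ((inner ℝ x u : ℝ) : ℂ))) - T u) * f u)
        = fun u => (Complex.exp (-Complex.I * ((inner ℝ (x + y) u : ℝ) : ℂ))
            - Complex.exp (-Complex.I * ((inner ℝ x u : ℝ) : ℂ))) * f u - T u * f u from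
        funext fun u => sub_mul _ _ _]
      rw [integral_sub hgf_int hTf_int, hTf0, sub_zero]
    rw [key]
    refine (norm_integral_le_integral_norm _).trans ?_
    have hptwise : ∀ u : EuclideanSpace ℝ (Fin d),
        ‖((Complex.exp (-Complex.I * ((inner ℝ (x + y) u : ℝ) : ℂ))
          - Complex.exp (-Complex.I * ((inner ℝ x u : ℝ) : ℂ))) - T u) * f u‖
        ≤ B * (‖u‖ ^ N * ‖f u‖) := by
      intro u
      rw [norm_mul]
      have hinner : (inner ℝ (x + y) u : ℝ) = (inner ℝ x u : ℝ) + (inner ℝ y u : ℝ) :=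
        inner_add_left x y u
      have hb1 := pointwise_bound N hN (inner ℝ x u : ℝ) (inner ℝ y u : ℝ)
      rw [← hinner] at hb1
      have hb2 : (∑ j ∈ Finset.Ico 1 N, |(inner ℝ y u : ℝ)| ^ j * |(inner ℝ x u : ℝ)| ^ (N - j))
          + |(inner ℝ y u : ℝ)| ^ N ≤ B * ‖u‖ ^ N := by
        rw [hBdef, add_mul, Finset.sum_mul]
        refine add_le_add ?_ ?_
        · refine Finset.sum_le_sum fun j hj => ?_
          obtain ⟨hj1, hj2⟩ := Finset.mem_Ico.mp hj
          have e1 : |(inner ℝ y u : ℝ)| ^ j ≤ (‖y‖ * ‖u‖) ^ j :=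
            pow_le_pow_left₀ (abs_nonneg _) (abs_real_inner_le_norm y u) _
          have e2 : |(inner ℝ x u : ℝ)| ^ (N - j) ≤ (‖x‖ * ‖u‖) ^ (N - j) :=
            pow_le_pow_left₀ (abs_nonneg _) (abs_real_inner_le_norm x u) _
          calc |(inner ℝ y u : ℝ)| ^ j * |(inner ℝ x u : ℝ)| ^ (N - j)
              ≤ (‖y‖ * ‖u‖) ^ j * (‖x‖ * ‖u‖) ^ (N - j) :=
                mul_le_mul e1 e2 (by positivity) (by positivity)
            _ = ‖y‖ ^ j * ‖x‖ ^ (N - j) * ‖u‖ ^ N := by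
                rw [mul_pow, mul_pow]
                have huu : ‖u‖ ^ j * ‖u‖ ^ (N - j) = ‖u‖ ^ N := by
                  rw [← pow_add]; congr 1; omega
                calc ‖y‖ ^ j * ‖u‖ ^ j * ((‖x‖) ^ (N - j) * ‖u‖ ^ (N - j))
                    = ‖y‖ ^ j * ‖x‖ ^ (N - j) * (‖u‖ ^ j * ‖u‖ ^ (N - j)) := by ring
                  _ = ‖y‖ ^ j * ‖x‖ ^ (N - j) * ‖u‖ ^ N := by rw [huu]
        · calc |(inner ℝ y u : ℝ)| ^ N ≤ (‖y‖ * ‖u‖) ^ N :=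
                pow_le_pow_left₀ (abs_nonneg _) (abs_real_inner_le_norm y u) _
            _ = ‖y‖ ^ N * ‖u‖ ^ N := mul_pow _ _ _
      calc ‖(Complex.exp (-Complex.I * ((inner ℝ (x + y) u : ℝ) : ℂ))
            - Complex.exp (-Complex.I * ((inner ℝ x u : ℝ) : ℂ))) - T u‖ * ‖f u‖
          ≤ ((∑ j ∈ Finset.Ico 1 N, |(inner ℝ y u : ℝ)| ^ j * |(inner ℝ x u : ℝ)| ^ (N - j))
              + |(inner ℝ y u : ℝ)| ^ N) * ‖f u‖ := by
            refine mul_le_mul_of_nonneg_right ?_ (norm_nonneg _)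
            exact hb1
        _ ≤ (B * ‖u‖ ^ N) * ‖f u‖ := mul_le_mul_of_nonneg_right hb2 (norm_nonneg _)
        _ = B * (‖u‖ ^ N * ‖f u‖) := by ring
    calc (∫ u : EuclideanSpace ℝ (Fin d),
          ‖((Complex.exp (-Complex.I * ((inner ℝ (x + y) u : ℝ) : ℂ))
            - Complex.exp (-Complex.I * ((inner ℝ x u : ℝ) : ℂ))) - T u) * f u‖)
        ≤ ∫ u : EuclideanSpace ℝ (Fin d), B * (‖u‖ ^ N * ‖f u‖) :=
          integral_mono_of_nonneg (Eventually.of_forall fun u => norm_nonneg _)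
            ((f.integrable_pow_mul volume N).const_mul B)
            (Eventually.of_forall hptwise)
      _ = B * MN := by rw [MeasureTheory.integral_const_mul, hMNdef]
  -- B ≤ N * (a + b)
  have hB : B ≤ N * (a + b) := by
    have hterm : ∀ j ∈ Finset.Ico 1 N, ‖y‖ ^ j * ‖x‖ ^ (N - j) ≤ a + b := by
      intro j hj
      obtain ⟨hj1, hj2⟩ := Finset.mem_Ico.mp hj
      rcases le_total ‖x‖ ‖y‖ with h | h
      · calc ‖y‖ ^ j * ‖x‖ ^ (N - j) ≤ ‖y‖ ^ j * ‖y‖ ^ (N - j) := by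
              gcongr
          _ = ‖y‖ ^ N := by rw [← pow_add]; congr 1; omega
          _ = b := rfl
          _ ≤ a + b := le_add_of_nonneg_left ha0
      · have hyj : ‖y‖ ^ j = ‖y‖ ^ (j - 1) * ‖y‖ := by
          rw [← pow_succ]; congr 1; omega
        calc ‖y‖ ^ j * ‖x‖ ^ (N - j) = ‖y‖ ^ (j - 1) * ‖x‖ ^ (N - j) * ‖y‖ := by
              rw [hyj]; ring
          _ ≤ ‖x‖ ^ (j - 1) * ‖x‖ ^ (N - j) * ‖y‖ := by
              gcongr
          _ = ‖x‖ ^ (N - 1) * ‖y‖ := by rw [← pow_add]; congr 2; omega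
          _ = a := rfl
          _ ≤ a + b := le_add_of_nonneg_right hb0
    have hsum : (∑ j ∈ Finset.Ico 1 N, ‖y‖ ^ j * ‖x‖ ^ (N - j)) ≤ (N - 1 : ℕ) * (a + b) := by
      calc (∑ j ∈ Finset.Ico 1 N, ‖y‖ ^ j * ‖x‖ ^ (N - j))
          ≤ (Finset.Ico 1 N).card • (a + b) := Finset.sum_le_card_nsmul _ _ _ hterm
        _ = (N - 1 : ℕ) * (a + b) := by rw [Nat.card_Ico, nsmul_eq_mul]
    have hyN : ‖y‖ ^ N ≤ a + b := le_add_of_nonneg_left ha0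
    have hcast : ((N - 1 : ℕ) : ℝ) + 1 = (N : ℝ) := by
      rw [Nat.cast_sub hN]; push_cast; ring
    calc B = (∑ j ∈ Finset.Ico 1 N, ‖y‖ ^ j * ‖x‖ ^ (N - j)) + ‖y‖ ^ N := rfl
      _ ≤ (N - 1 : ℕ) * (a + b) + (a + b) := add_le_add hsum hyN
      _ = (((N - 1 : ℕ) : ℝ) + 1) * (a + b) := by ring
      _ = N * (a + b) := by rw [hcast]
  -- crude bound
  have hcrude : ‖fourierT d f (x + y) - fourierT d f x‖ ≤ 2 * M0 := by
    have hFT : ∀ z : EuclideanSpace ℝ (Fin d), ‖fourierT d f z‖ ≤ M0 := by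
      intro z
      rw [fourierT]
      refine (norm_integral_le_integral_norm _).trans ?_
      rw [hM0def]
      refine le_of_eq ?_
      congr 1; funext u
      rw [norm_mul, hnorm1 z u, one_mul]
    calc ‖fourierT d f (x + y) - fourierT d f x‖
        ≤ ‖fourierT d f (x + y)‖ + ‖fourierT d f x‖ := norm_sub_le _ _
      _ ≤ M0 + M0 := add_le_add (hFT _) (hFT _)
      _ = 2 * M0 := by ring
  -- conclusion
  rcases le_or_gt (a + b) 1 with hab | hab
  · have hmina : min a 1 = a := min_eq_left (by linarith)
    have hminb : min b 1 = b := min_eq_left (by linarith)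
    rw [hmina, hminb]
    calc ‖fourierT d f (x + y) - fourierT d f x‖ ≤ B * MN := hmain
      _ ≤ (N * (a + b)) * MN := mul_le_mul_of_nonneg_right hB hMN
      _ = (N * MN) * (a + b) := by ring
      _ ≤ C * (a + b) := mul_le_mul_of_nonneg_right (by rw [hCdef]; linarith) (by linarith)
  · have hmin : 1 ≤ min a 1 + min b 1 := by
      rcases le_total 1 a with h | h
      · rw [min_eq_right h]
        have : 0 ≤ min b 1 := le_min hb0 zero_le_one
        linarith
      · rcases le_total 1 b with h' | h'
        · rw [min_eq_right h']
          have : 0 ≤ min a 1 := le_min ha0 zero_le_one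
          linarith
        · rw [min_eq_left h, min_eq_left h']
          linarith
    calc ‖fourierT d f (x + y) - fourierT d f x‖ ≤ 2 * M0 := hcrude
      _ ≤ C * 1 := by rw [hCdef]; linarith
      _ ≤ C * (min a 1 + min b 1) := mul_le_mul_of_nonneg_left hmin hC0.le
end

section
/- Let T > 0, H > 0, γ ≥ 1, a ≥ 0, b ≥ 0, d ≥ 1 an integer with H(a + b + d) < 1. Then there is a constant C depending on H, d, a, b such that for all ε > 0, ∫_0^T ∫_{R^d} |x|^a min(|γ^{-1} ε^{1/2} x|^b, 1) e^{−|x|^2 t^{2H}} dx dt ≤ C γ^{−b} ε^{b/2} T^{1 − H(a+b+d)}. -/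
open MeasureTheory Real Set


lemma aux_rpow_le_exp {p u : ℝ} (hp : 0 ≤ p) (hu : 0 < u) :
    ∃ M > (0:ℝ), ∀ r : ℝ, 0 ≤ r → r ^ p ≤ M * Real.exp (u * r ^ 2) := by
  set n := ⌈p⌉₊ with hn
  refine ⟨1 + ((Nat.factorial n) : ℝ) / u ^ n, by positivity, fun r hr => ?_⟩
  have hexp1 : (1:ℝ) ≤ Real.exp (u * r ^ 2) := Real.one_le_exp (by positivity)
  have hfac : (0:ℝ) ≤ ((Nat.factorial n) : ℝ) / u ^ n := by positivity
  rcases le_or_gt r 1 with h1 | h1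
  · calc r ^ p ≤ 1 := Real.rpow_le_one hr h1 hp
      _ ≤ (1 + ((Nat.factorial n) : ℝ) / u ^ n) * Real.exp (u * r ^ 2) := by nlinarith
  · have hp2n : p ≤ ((2 * n : ℕ) : ℝ) := by
      push_cast
      have := Nat.le_ceil p
      have hn0 : (0:ℝ) ≤ (n:ℝ) := Nat.cast_nonneg n
      linarith
    have h2 : r ^ p ≤ r ^ ((2 * n : ℕ) : ℝ) :=
      Real.rpow_le_rpow_of_exponent_le h1.le hp2n
    have h3 : r ^ ((2 * n : ℕ) : ℝ) = (r ^ 2) ^ n := by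
      rw [Real.rpow_natCast, pow_mul]
    have h4 : (u * r ^ 2) ^ n ≤ (Nat.factorial n) * Real.exp (u * r ^ 2) := by
      have := Real.pow_div_factorial_le_exp (u * r ^ 2) (by positivity) n
      rw [div_le_iff₀ (by positivity : (0:ℝ) < ((Nat.factorial n) : ℝ))] at this
      linarith [this]
    have h5 : (r ^ 2) ^ n ≤ ((Nat.factorial n) : ℝ) / u ^ n * Real.exp (u * r ^ 2) := by
      rw [mul_pow] at h4
      rw [div_mul_eq_mul_div, le_div_iff₀ (by positivity : (0:ℝ) < u ^ n)]
      nlinarith [pow_pos hu n]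
    calc r ^ p ≤ (r ^ 2) ^ n := by rw [← h3]; exact h2
      _ ≤ ((Nat.factorial n) : ℝ) / u ^ n * Real.exp (u * r ^ 2) := h5
      _ ≤ (1 + ((Nat.factorial n) : ℝ) / u ^ n) * Real.exp (u * r ^ 2) := by nlinarith

lemma aux_integrable (d : ℕ) {p c : ℝ} (hp : 0 ≤ p) (hc : 0 < c) :
    Integrable (fun x : EuclideanSpace ℝ (Fin d) => ‖x‖ ^ p * Real.exp (-‖x‖ ^ 2 * c)) := by
  obtain ⟨M, hM, hMle⟩ := aux_rpow_le_exp hp (half_pos hc)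
  have hexp : Integrable (fun x : EuclideanSpace ℝ (Fin d) => Real.exp (-(c / 2) * ‖x‖ ^ 2)) := by
    have h1 := GaussianFourier.integrable_cexp_neg_mul_sq_norm_add (V := EuclideanSpace ℝ (Fin d))
      (b := (c / 2 : ℂ)) (by simpa using half_pos hc) 0 0
    have h2 := h1.re
    refine h2.congr (Filter.Eventually.of_forall fun v => ?_)
    have h3 : (-(c / 2 : ℂ) * (‖v‖ : ℂ) ^ 2 + 0 * ((inner ℝ (0 : EuclideanSpace ℝ (Fin d)) v : ℝ) : ℂ))
        = ((-(c / 2) * ‖v‖ ^ 2 : ℝ) : ℂ) := by push_cast; ring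
    simp only [h3, RCLike.re_to_complex, Complex.exp_ofReal_re]
  refine Integrable.mono' (hexp.const_mul M) ?_ (Filter.Eventually.of_forall fun x => ?_)
  · exact ((continuous_norm.rpow_const fun x => Or.inr hp).mul
      (((continuous_norm.pow 2).neg.mul continuous_const).rexp)).aestronglyMeasurable
  · have h0 : (0:ℝ) ≤ ‖x‖ ^ p * Real.exp (-‖x‖ ^ 2 * c) := by positivity
    rw [Real.norm_eq_abs, abs_of_nonneg h0]
    calc ‖x‖ ^ p * Real.exp (-‖x‖ ^ 2 * c)
        ≤ M * Real.exp (c / 2 * ‖x‖ ^ 2) * Real.exp (-‖x‖ ^ 2 * c) := by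
          exact mul_le_mul_of_nonneg_right (hMle _ (norm_nonneg x)) (Real.exp_nonneg _)
      _ = M * Real.exp (-(c / 2) * ‖x‖ ^ 2) := by
          rw [mul_assoc, ← Real.exp_add]; ring_nf

lemma aux_scaling (d : ℕ) {p : ℝ} (hp : 0 ≤ p) {R : ℝ} (hR : 0 < R) :
    ∫ x : EuclideanSpace ℝ (Fin d), ‖x‖ ^ p * Real.exp (-‖x‖ ^ 2 * R ^ 2)
      = R ^ (-(p + d)) * ∫ y : EuclideanSpace ℝ (Fin d), ‖y‖ ^ p * Real.exp (-‖y‖ ^ 2 * 1) := by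
  have key := MeasureTheory.Measure.integral_comp_smul_of_nonneg (μ := volume)
      (f := fun y : EuclideanSpace ℝ (Fin d) => ‖y‖ ^ p * Real.exp (-‖y‖ ^ 2 * 1)) R (hR := hR.le)
  have hnorm : ∀ x : EuclideanSpace ℝ (Fin d), ‖R • x‖ = R * ‖x‖ := fun x => by
    rw [norm_smul, Real.norm_eq_abs, abs_of_nonneg hR.le]
  have hlhs : (∫ x : EuclideanSpace ℝ (Fin d),
      (fun y : EuclideanSpace ℝ (Fin d) => ‖y‖ ^ p * Real.exp (-‖y‖ ^ 2 * 1)) (R • x))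
      = R ^ p * ∫ x : EuclideanSpace ℝ (Fin d), ‖x‖ ^ p * Real.exp (-‖x‖ ^ 2 * R ^ 2) := by
    rw [← integral_const_mul]
    congr 1 with x
    beta_reduce
    rw [hnorm x, Real.mul_rpow hR.le (norm_nonneg x), mul_pow]
    ring_nf
  rw [hlhs, finrank_euclideanSpace_fin] at key
  have hRp : (0:ℝ) < R ^ p := Real.rpow_pos_of_pos hR p
  have hRd : ((R:ℝ) ^ (d:ℕ) : ℝ) = R ^ ((d:ℕ) : ℝ) := (Real.rpow_natCast R d).symm
  rw [smul_eq_mul] at key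
  have : (∫ x : EuclideanSpace ℝ (Fin d), ‖x‖ ^ p * Real.exp (-‖x‖ ^ 2 * R ^ 2))
      = (R ^ p)⁻¹ * ((R ^ (d:ℕ))⁻¹ * ∫ y : EuclideanSpace ℝ (Fin d), ‖y‖ ^ p * Real.exp (-‖y‖ ^ 2 * 1)) := by
    rw [← key, ← mul_assoc, inv_mul_cancel₀ hRp.ne', one_mul]
  rw [this, hRd, ← Real.rpow_neg hR.le, ← Real.rpow_neg hR.le, ← mul_assoc,
    ← Real.rpow_add hR]
  ring_nf

/-- Subcritical case of the scaling estimate: if `H(a+b+d) < 1` then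
`∫_0^T ∫_{ℝ^d} |x|^a min(|γ⁻¹ ε^{1/2} x|^b, 1) e^{-|x|² t^{2H}} dx dt
  ≤ C γ^{-b} ε^{b/2} T^{1-H(a+b+d)}`. -/
theorem statement3 (d : ℕ) (hd : 1 ≤ d) (H a b : ℝ)
    (hH : 0 < H) (ha : 0 ≤ a) (hb : 0 ≤ b) (habd : H * (a + b + d) < 1) :
    ∃ C > (0:ℝ), ∀ T > (0:ℝ), ∀ γ ≥ (1:ℝ), ∀ ε > (0:ℝ),
      (∫ t in Ioo (0:ℝ) T, ∫ x : EuclideanSpace ℝ (Fin d),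
          ‖x‖ ^ a * min ((γ⁻¹ * Real.sqrt ε * ‖x‖) ^ b) 1 *
            Real.exp (-‖x‖ ^ 2 * t ^ (2 * H))) ≤
        C * γ ^ (-b) * ε ^ (b / 2) * T ^ (1 - H * (a + b + d)) := by
  have hp : 0 ≤ a + b := add_nonneg ha hb
  have hκ0 : 0 ≤ H * (a + b + d) := mul_nonneg hH.le (by positivity)
  have hκ1 : 0 < 1 - H * (a + b + d) := by linarith
  set K := ∫ y : EuclideanSpace ℝ (Fin d), ‖y‖ ^ (a + b) * Real.exp (-‖y‖ ^ 2 * 1) with hK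
  have hK0 : 0 ≤ K := integral_nonneg fun y => by positivity
  refine ⟨(K + 1) / (1 - H * (a + b + d)), by positivity, fun T hT γ hγ ε hε => ?_⟩
  have hγ0 : 0 < γ := lt_of_lt_of_le one_pos hγ
  set q := γ⁻¹ * Real.sqrt ε with hq
  have hq0 : 0 ≤ q := by positivity
  have hnn : ∀ (x : EuclideanSpace ℝ (Fin d)) (c : ℝ),
      (0:ℝ) ≤ ‖x‖ ^ a * min ((q * ‖x‖) ^ b) 1 * Real.exp c := fun x c =>
    mul_nonneg (mul_nonneg (Real.rpow_nonneg (norm_nonneg x) a)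
      (le_min (Real.rpow_nonneg (by positivity) b) zero_le_one)) (Real.exp_nonneg c)
  have hinner : ∀ t ∈ Ioo (0:ℝ) T,
      (∫ x : EuclideanSpace ℝ (Fin d), ‖x‖ ^ a * min ((q * ‖x‖) ^ b) 1 *
          Real.exp (-‖x‖ ^ 2 * t ^ (2 * H)))
        ≤ q ^ b * K * t ^ (-(H * (a + b + d))) := by
    intro t ht
    have ht0 : 0 < t := ht.1
    have hc : 0 < t ^ (2 * H) := Real.rpow_pos_of_pos ht0 _
    have hint := aux_integrable d hp hc
    have step1 : (∫ x : EuclideanSpace ℝ (Fin d), ‖x‖ ^ a * min ((q * ‖x‖) ^ b) 1 *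
        Real.exp (-‖x‖ ^ 2 * t ^ (2 * H)))
        ≤ ∫ x : EuclideanSpace ℝ (Fin d),
            q ^ b * (‖x‖ ^ (a + b) * Real.exp (-‖x‖ ^ 2 * t ^ (2 * H))) := by
      refine integral_mono_of_nonneg (Filter.Eventually.of_forall fun x => hnn x _)
        (hint.const_mul _) (Filter.Eventually.of_forall fun x => ?_)
      calc ‖x‖ ^ a * min ((q * ‖x‖) ^ b) 1 * Real.exp (-‖x‖ ^ 2 * t ^ (2 * H))
          ≤ ‖x‖ ^ a * (q * ‖x‖) ^ b * Real.exp (-‖x‖ ^ 2 * t ^ (2 * H)) := by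
            gcongr
            exact min_le_left _ _
        _ = q ^ b * (‖x‖ ^ (a + b) * Real.exp (-‖x‖ ^ 2 * t ^ (2 * H))) := by
            rw [Real.mul_rpow hq0 (norm_nonneg x),
              Real.rpow_add_of_nonneg (norm_nonneg x) ha hb]
            ring
    have hR : (0:ℝ) < t ^ H := Real.rpow_pos_of_pos ht0 H
    have hsq : (t ^ H) ^ 2 = t ^ (2 * H) := by
      rw [← Real.rpow_natCast (t ^ H) 2, ← Real.rpow_mul ht0.le]
      norm_num [mul_comm]
    have hscale := aux_scaling d hp hR
    rw [hsq] at hscale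
    have hpow : (t ^ H) ^ (-(a + b + (d:ℝ))) = t ^ (-(H * (a + b + d))) := by
      rw [← Real.rpow_mul ht0.le]
      ring_nf
    calc (∫ x : EuclideanSpace ℝ (Fin d), ‖x‖ ^ a * min ((q * ‖x‖) ^ b) 1 *
          Real.exp (-‖x‖ ^ 2 * t ^ (2 * H)))
        ≤ ∫ x : EuclideanSpace ℝ (Fin d),
            q ^ b * (‖x‖ ^ (a + b) * Real.exp (-‖x‖ ^ 2 * t ^ (2 * H))) := step1
      _ = q ^ b * ∫ x : EuclideanSpace ℝ (Fin d),
            ‖x‖ ^ (a + b) * Real.exp (-‖x‖ ^ 2 * t ^ (2 * H)) := integral_const_mul _ _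
      _ = q ^ b * K * t ^ (-(H * (a + b + d))) := by
          rw [hscale, hpow]; ring
  have houter : (∫ t in Ioo (0:ℝ) T, ∫ x : EuclideanSpace ℝ (Fin d),
        ‖x‖ ^ a * min ((q * ‖x‖) ^ b) 1 * Real.exp (-‖x‖ ^ 2 * t ^ (2 * H)))
      ≤ ∫ t in Ioo (0:ℝ) T, q ^ b * K * t ^ (-(H * (a + b + d))) := by
    refine integral_mono_of_nonneg
      (Filter.Eventually.of_forall fun t => integral_nonneg fun x => hnn x _)
      (((intervalIntegral.integrableOn_Ioo_rpow_iff hT).2 (by linarith)).const_mul _) ?_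
    filter_upwards [ae_restrict_mem measurableSet_Ioo] with t ht using hinner t ht
  have hval : (∫ t in Ioo (0:ℝ) T, t ^ (-(H * (a + b + d))))
      = T ^ (1 - H * (a + b + d)) / (1 - H * (a + b + d)) := by
    rw [← integral_Ioc_eq_integral_Ioo, ← intervalIntegral.integral_of_le hT.le,
      integral_rpow (Or.inl (by linarith))]
    have he : -(H * (a + b + ↑d)) + 1 = 1 - H * (a + b + ↑d) := by ring
    rw [Real.zero_rpow (by rw [he]; exact ne_of_gt hκ1), he, sub_zero]
  have hqb : q ^ b = γ ^ (-b) * ε ^ (b / 2) := by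
    rw [hq, Real.mul_rpow (inv_nonneg.2 hγ0.le) (Real.sqrt_nonneg ε),
      Real.inv_rpow hγ0.le, ← Real.rpow_neg hγ0.le, Real.sqrt_eq_rpow,
      ← Real.rpow_mul hε.le, show 1 / 2 * b = b / 2 by ring]
  calc (∫ t in Ioo (0:ℝ) T, ∫ x : EuclideanSpace ℝ (Fin d),
        ‖x‖ ^ a * min ((q * ‖x‖) ^ b) 1 * Real.exp (-‖x‖ ^ 2 * t ^ (2 * H)))
      ≤ ∫ t in Ioo (0:ℝ) T, q ^ b * K * t ^ (-(H * (a + b + d))) := houter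
    _ = q ^ b * K * (T ^ (1 - H * (a + b + d)) / (1 - H * (a + b + d))) := by
        rw [integral_const_mul, hval]
    _ = γ ^ (-b) * ε ^ (b / 2) *
          (K * (T ^ (1 - H * (a + b + d)) / (1 - H * (a + b + d)))) := by rw [hqb]; ring
    _ ≤ γ ^ (-b) * ε ^ (b / 2) *
          ((K + 1) * (T ^ (1 - H * (a + b + d)) / (1 - H * (a + b + d)))) := by
        have h1 : 0 ≤ γ ^ (-b) := Real.rpow_nonneg hγ0.le _
        have h2 : 0 ≤ ε ^ (b / 2) := Real.rpow_nonneg hε.le _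
        have h3 : 0 ≤ T ^ (1 - H * (a + b + d)) / (1 - H * (a + b + d)) :=
          div_nonneg (Real.rpow_nonneg hT.le _) hκ1.le
        have h4 : K ≤ K + 1 := by linarith
        exact mul_le_mul_of_nonneg_left (mul_le_mul_of_nonneg_right h4 h3) (by positivity)
    _ = (K + 1) / (1 - H * (a + b + d)) * γ ^ (-b) * ε ^ (b / 2) *
          T ^ (1 - H * (a + b + d)) := by ring
end

section
/- Let T > 0, H > 0, γ ≥ 1, a ≥ 0, b ≥ 0, d ≥ 1 an integer with 1 − Hb < H(a+d) < 1. Then there is a constant C depending on H, d, a, b such that for all ε ∈ (0,1), ∫_0^T ∫_{R^d} |x|^a min(|γ^{-1} ε^{1/2} x|^b, 1) e^{−|x|^2 t^{2H}} dx dt ≤ C γ^{−min(1/H − a − d, b)} ε^{−(a+d−1/H)/2}. -/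
open MeasureTheory Real Set
open scoped ENNReal

lemma aux_meas_rpow_const (p : ℝ) : Measurable fun x : ℝ => x ^ p := by measurability

lemma aux_int_le_lint {α : Type*} [MeasurableSpace α] (μ : Measure α) (f : α → ℝ)
    (hf : ∀ x, 0 ≤ f x) :
    ∫ x, f x ∂μ ≤ (∫⁻ x, ENNReal.ofReal (f x) ∂μ).toReal := by
  by_cases h : Integrable f μ
  · rw [integral_eq_lintegral_of_nonneg_ae (Filter.Eventually.of_forall hf) h.aestronglyMeasurable]
  · rw [integral_undef h]; exact ENNReal.toReal_nonneg

lemma aux_integrableOn_exp_neg_mul_rpow {p b : ℝ} (hp : 0 < p) (hb : 0 < b) :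
    IntegrableOn (fun t : ℝ => Real.exp (-b * t ^ p)) (Ioi 0) := by
  have h0 : IntegrableOn (fun y : ℝ => y ^ (p⁻¹ - 1) * Real.exp (-b * y)) (Ioi 0) := by
    have hq : (-1:ℝ) < p⁻¹ - 1 := by have := inv_pos.mpr hp; linarith
    simpa using integrableOn_rpow_mul_exp_neg_mul_rpow hq zero_lt_one hb
  have h := (integrableOn_Ioi_comp_rpow_iff' (fun y : ℝ => y ^ (p⁻¹ - 1) * Real.exp (-b * y))
    hp.ne').mpr h0
  refine h.congr_fun (fun x hx => ?_) measurableSet_Ioi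
  have hx0 : (0:ℝ) < x := hx
  beta_reduce
  rw [smul_eq_mul, ← Real.rpow_mul hx0.le, ← mul_assoc, ← Real.rpow_add hx0,
    show p - 1 + p * (p⁻¹ - 1) = 0 by field_simp; ring, Real.rpow_zero, one_mul]

lemma aux_lintegral_fun_norm_addHaar {E : Type*} [NormedAddCommGroup E] [NormedSpace ℝ E]
    [MeasurableSpace E] [BorelSpace E] [Nontrivial E] [FiniteDimensional ℝ E]
    (μ : Measure E) [μ.IsAddHaarMeasure] (g : ℝ → ℝ≥0∞) (hg : Measurable g) :
    ∫⁻ x, g ‖x‖ ∂μ = μ.toSphere univ *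
      ∫⁻ r in Ioi (0:ℝ), ENNReal.ofReal (r ^ (Module.finrank ℝ E - 1)) * g r := by
  have hmeas : Measurable (fun y : Metric.sphere (0:E) 1 × Ioi (0:ℝ) => g ↑y.2) :=
    hg.comp (measurable_subtype_coe.comp measurable_snd)
  calc
    ∫⁻ x, g ‖x‖ ∂μ = ∫⁻ x : ({(0:E)}ᶜ : Set E), g ‖(x:E)‖ ∂(μ.comap (↑)) := by
      rw [lintegral_subtype_comap (measurableSet_singleton _).compl fun x ↦ g ‖x‖,
        MeasureTheory.restrict_compl_singleton]
    _ = ∫⁻ y : Metric.sphere (0:E) 1 × Ioi (0:ℝ), g y.2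
        ∂μ.toSphere.prod (.volumeIoiPow (Module.finrank ℝ E - 1)) := by
      simpa only [homeomorphUnitSphereProd_apply_snd_coe] using (μ.measurePreserving_homeomorphUnitSphereProd).lintegral_comp
        (f := fun y : Metric.sphere (0:E) 1 × Ioi (0:ℝ) => g y.2) hmeas
    _ = μ.toSphere univ * ∫⁻ r : Ioi (0:ℝ), g r
        ∂(Measure.volumeIoiPow (Module.finrank ℝ E - 1)) := by
      rw [lintegral_prod _ hmeas.aemeasurable]
      simp [lintegral_const, mul_comm]
    _ = _ := by
      have hdens : Measurable (fun r : Ioi (0:ℝ) =>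
          ENNReal.ofReal ((r:ℝ) ^ (Module.finrank ℝ E - 1))) :=
        (measurable_subtype_coe.pow_const _).ennreal_ofReal
      have hgc : Measurable (fun r : Ioi (0:ℝ) => g ↑r) := hg.comp measurable_subtype_coe
      rw [Measure.volumeIoiPow, lintegral_withDensity_eq_lintegral_mul _ hdens hgc,
        Pi.mul_def]
      simp only []
      rw [lintegral_subtype_comap measurableSet_Ioi
        (fun r : ℝ => ENNReal.ofReal (r ^ (Module.finrank ℝ E - 1)) * g r)]

set_option maxHeartbeats 1000000 in
/-- Supercritical case of the scaling estimate: if `1 - Hb < H(a+d) < 1` then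
`∫_0^T ∫_{ℝ^d} |x|^a min(|γ⁻¹ ε^{1/2} x|^b, 1) e^{-|x|² t^{2H}} dx dt
  ≤ C γ^{-min(1/H - a - d, b)} ε^{-(a+d-1/H)/2}`. -/
theorem statement4 (d : ℕ) (hd : 1 ≤ d) (H a b : ℝ)
    (hH : 0 < H) (ha : 0 ≤ a) (hb : 0 ≤ b)
    (h1 : 1 - H * b < H * (a + d)) (h2 : H * (a + d) < 1) :
    ∃ C > (0:ℝ), ∀ T > (0:ℝ), ∀ γ ≥ (1:ℝ), ∀ ε : ℝ, 0 < ε → ε < 1 →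
      (∫ t in Ioo (0:ℝ) T, ∫ x : EuclideanSpace ℝ (Fin d),
          ‖x‖ ^ a * min ((γ⁻¹ * Real.sqrt ε * ‖x‖) ^ b) 1 *
            Real.exp (-‖x‖ ^ 2 * t ^ (2 * H))) ≤
        C * γ ^ (-(min (1 / H - a - d) b)) * ε ^ (-((a + d - 1 / H) / 2)) := by
  classical
  haveI : Nontrivial (EuclideanSpace ℝ (Fin d)) :=
    Module.nontrivial_of_finrank_pos (R := ℝ) (M := EuclideanSpace ℝ (Fin d))
      (by rw [finrank_euclideanSpace_fin]; exact hd)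
  set α : ℝ := a + d - 1 / H with hαdef
  have hH' : (0:ℝ) < 1 / H := by positivity
  have hα0 : α < 0 := by
    have : a + d < 1 / H := (lt_div_iff₀ hH).mpr (by linarith)
    simp only [hαdef]; linarith
  have hαb : 0 < α + b := by
    have : (1:ℝ) / H < a + d + b := (div_lt_iff₀ hH).mpr (by nlinarith)
    simp only [hαdef]; linarith
  have hab : ¬ (a = 0 ∧ b = 0) := by
    rintro ⟨rfl, rfl⟩
    simp only [mul_zero, sub_zero, zero_add] at h1 h2
    exact absurd (h1.trans h2) (lt_irrefl _)
  -- constants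
  set K : ℝ := Real.Gamma (1 / (2 * H) + 1) with hKdef
  have hK : 0 < K := Real.Gamma_pos_of_pos (by positivity)
  set S : ℝ≥0∞ := (volume : Measure (EuclideanSpace ℝ (Fin d))).toSphere univ with hSdef
  have hS_ne_top : S ≠ ∞ := measure_ne_top _ _
  have hS_pos : 0 < S.toReal := by
    rw [hSdef, Measure.toSphere_apply_univ, ENNReal.toReal_mul]
    apply mul_pos
    · rw [ENNReal.toReal_natCast]
      have : 0 < Module.finrank ℝ (EuclideanSpace ℝ (Fin d)) := by
        rw [finrank_euclideanSpace_fin]; exact hd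
      exact_mod_cast this
    · exact ENNReal.toReal_pos
        (Metric.measure_ball_pos volume (0 : EuclideanSpace ℝ (Fin d)) one_pos).ne'
        measure_ball_lt_top.ne
  set D : ℝ := 1 / (α + b) - 1 / α with hDdef
  have hD : 0 < D := by
    have hp1 : 0 < 1 / (α + b) := by positivity
    have hp2 : 0 < -(1/α) := by
      rw [← one_div_neg_eq_neg_one_div]
      have hα0' : 0 < -α := by linarith
      positivity
    simp only [hDdef]; linarith
  refine ⟨S.toReal * D * K, by positivity, ?_⟩
  intro T hT γ hγ ε hε0 hε1
  have hγ0 : (0:ℝ) < γ := lt_of_lt_of_le one_pos hγ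
  set c : ℝ := γ⁻¹ * Real.sqrt ε with hcdef
  have hc0 : 0 < c := mul_pos (inv_pos.mpr hγ0) (Real.sqrt_pos.mpr hε0)
  set F : ℝ → EuclideanSpace ℝ (Fin d) → ℝ := fun t x =>
    ‖x‖ ^ a * min ((c * ‖x‖) ^ b) 1 * Real.exp (-‖x‖ ^ 2 * t ^ (2 * H)) with hFdef
  have hFnn : ∀ t x, 0 ≤ F t x := fun t x =>
    mul_nonneg (mul_nonneg (Real.rpow_nonneg (norm_nonneg _) _)
      (le_min (Real.rpow_nonneg (by positivity) _) zero_le_one)) (Real.exp_pos _).le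
  have hAnn : ∀ x : EuclideanSpace ℝ (Fin d), 0 ≤ ‖x‖ ^ a * min ((c * ‖x‖) ^ b) 1 := fun x =>
    mul_nonneg (Real.rpow_nonneg (norm_nonneg _) _)
      (le_min (Real.rpow_nonneg (by positivity) _) zero_le_one)
  -- measurability
  have hFm : Measurable (fun p : ℝ × EuclideanSpace ℝ (Fin d) =>
      ENNReal.ofReal (F p.1 p.2)) := by
    apply Measurable.ennreal_ofReal
    refine Measurable.mul (Measurable.mul ?_ ?_) ?_
    · exact (aux_meas_rpow_const a).comp measurable_snd.norm
    · exact Measurable.min ((aux_meas_rpow_const b).comp (measurable_snd.norm.const_mul c))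
        measurable_const
    · exact Real.measurable_exp.comp (((measurable_snd.norm.pow_const 2).neg).mul
        ((aux_meas_rpow_const (2*H)).comp measurable_fst))
  -- the radial profile
  set φ : ℝ → ℝ := fun r => r ^ a * min ((c * r) ^ b) 1 * (r ^ (-(1/H)) * K) with hφdef
  have hφm : Measurable fun r : ℝ => ENNReal.ofReal (φ r) := by
    apply Measurable.ennreal_ofReal
    exact ((aux_meas_rpow_const a).mul
      (((aux_meas_rpow_const b).comp (measurable_id.const_mul c)).min measurable_const)).mul
      ((aux_meas_rpow_const (-(1/H))).mul_const K)
  -- pointwise time integral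
  have key : ∀ x : EuclideanSpace ℝ (Fin d),
      (∫⁻ t in Ioi (0:ℝ), ENNReal.ofReal (F t x)) = ENNReal.ofReal (φ ‖x‖) := by
    intro x
    rcases eq_or_lt_of_le (norm_nonneg x) with hx | hx
    · -- ‖x‖ = 0
      have hA : ∀ t, F t x = 0 := by
        intro t
        simp only [hFdef, ← hx]
        by_cases ha0 : a = 0
        · have hb0 : b ≠ 0 := fun hb0 => hab ⟨ha0, hb0⟩
          rw [ha0, Real.rpow_zero, one_mul, mul_zero, Real.zero_rpow hb0,
            min_eq_left zero_le_one, zero_mul]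
        · rw [Real.zero_rpow ha0, zero_mul, zero_mul]
      have hφ0 : φ ‖x‖ = 0 := by
        simp only [hφdef, ← hx]
        rw [Real.zero_rpow (neg_ne_zero.mpr hH'.ne'), zero_mul, mul_zero]
      simp only [hA, hφ0, ENNReal.ofReal_zero, lintegral_zero]
    · -- 0 < ‖x‖
      have hb2 : (0:ℝ) < ‖x‖^2 := by positivity
      have hInt : IntegrableOn (fun t : ℝ => Real.exp (-‖x‖^2 * t ^ (2*H))) (Ioi 0) :=
        aux_integrableOn_exp_neg_mul_rpow (by positivity) hb2
      have hval : ∫ t in Ioi (0:ℝ), Real.exp (-‖x‖^2 * t ^ (2*H)) = ‖x‖ ^ (-(1/H)) * K := by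
        rw [integral_exp_neg_mul_rpow (by positivity) hb2, hKdef]
        congr 1
        rw [← Real.rpow_natCast ‖x‖ 2, ← Real.rpow_mul (norm_nonneg x)]
        congr 1
        push_cast
        field_simp
      calc ∫⁻ t in Ioi (0:ℝ), ENNReal.ofReal (F t x)
          = ∫⁻ t in Ioi (0:ℝ), ENNReal.ofReal (‖x‖ ^ a * min ((c * ‖x‖) ^ b) 1) *
              ENNReal.ofReal (Real.exp (-‖x‖^2 * t^(2*H))) := by
            apply lintegral_congr; intro t
            rw [← ENNReal.ofReal_mul (hAnn x)]
        _ = ENNReal.ofReal (‖x‖ ^ a * min ((c * ‖x‖) ^ b) 1) *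
              ∫⁻ t in Ioi (0:ℝ), ENNReal.ofReal (Real.exp (-‖x‖^2 * t^(2*H))) :=
            lintegral_const_mul' _ _ ENNReal.ofReal_ne_top
        _ = ENNReal.ofReal (‖x‖ ^ a * min ((c * ‖x‖) ^ b) 1) *
              ENNReal.ofReal (‖x‖ ^ (-(1/H)) * K) := by
            rw [← ofReal_integral_eq_lintegral_ofReal hInt
              (Filter.Eventually.of_forall fun t => (Real.exp_pos _).le), hval]
        _ = ENNReal.ofReal (φ ‖x‖) := by
            rw [← ENNReal.ofReal_mul (hAnn x)]
  -- the key split bound for the radial integral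
  have hsplit : ∫⁻ r in Ioi (0:ℝ), ENNReal.ofReal (r ^ (α-1) * min ((c*r)^b) 1) ≤
      ENNReal.ofReal (c ^ (-α) * D) := by
    have hy : (0:ℝ) < c⁻¹ := inv_pos.mpr hc0
    rw [← Ioc_union_Ioi_eq_Ioi hy.le, lintegral_union measurableSet_Ioi (Ioc_disjoint_Ioi le_rfl)]
    have hB1 : ∫⁻ r in Ioc (0:ℝ) c⁻¹, ENNReal.ofReal (r ^ (α-1) * min ((c*r)^b) 1) ≤
        ENNReal.ofReal (c^b * ((c⁻¹)^(α+b)/(α+b))) := by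
      calc ∫⁻ r in Ioc (0:ℝ) c⁻¹, ENNReal.ofReal (r ^ (α-1) * min ((c*r)^b) 1)
          ≤ ∫⁻ r in Ioc (0:ℝ) c⁻¹, ENNReal.ofReal (c^b * r^(α+b-1)) := by
            apply lintegral_mono_ae
            filter_upwards [ae_restrict_mem measurableSet_Ioc] with r hr
            apply ENNReal.ofReal_le_ofReal
            have hr0 : (0:ℝ) < r := hr.1
            calc r^(α-1) * min ((c*r)^b) 1 ≤ r^(α-1) * (c*r)^b :=
                  mul_le_mul_of_nonneg_left (min_le_left _ _) (Real.rpow_nonneg hr0.le _)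
              _ = c^b * r^(α+b-1) := by
                  rw [Real.mul_rpow hc0.le hr0.le]
                  calc r^(α-1) * (c^b * r^b) = c^b * (r^(α-1) * r^b) := by ring
                    _ = c^b * r^(α-1+b) := by rw [← Real.rpow_add hr0]
                    _ = c^b * r^(α+b-1) := by rw [show α-1+b = α+b-1 by ring]
        _ = ENNReal.ofReal (∫ r in Ioc (0:ℝ) c⁻¹, c^b * r^(α+b-1)) := by
            rw [ofReal_integral_eq_lintegral_ofReal]
            · exact ((intervalIntegral.intervalIntegrable_rpow'
                (by linarith : (-1:ℝ) < α+b-1)).1).const_mul _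
            · filter_upwards [ae_restrict_mem measurableSet_Ioc] with r hr
              exact mul_nonneg (Real.rpow_nonneg hc0.le _) (Real.rpow_nonneg hr.1.le _)
        _ = ENNReal.ofReal (c^b * ((c⁻¹)^(α+b)/(α+b))) := by
            congr 1
            rw [MeasureTheory.integral_const_mul]
            congr 1
            rw [← intervalIntegral.integral_of_le hy.le,
              integral_rpow (Or.inl (by linarith : (-1:ℝ) < α+b-1)),
              show α+b-1+1 = α+b by ring, Real.zero_rpow (by linarith : α+b ≠ 0), sub_zero]
    have hB2 : ∫⁻ r in Ioi c⁻¹, ENNReal.ofReal (r ^ (α-1) * min ((c*r)^b) 1) ≤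
        ENNReal.ofReal (-((c⁻¹)^α)/α) := by
      calc ∫⁻ r in Ioi c⁻¹, ENNReal.ofReal (r ^ (α-1) * min ((c*r)^b) 1)
          ≤ ∫⁻ r in Ioi c⁻¹, ENNReal.ofReal (r^(α-1)) := by
            apply lintegral_mono_ae
            filter_upwards [ae_restrict_mem measurableSet_Ioi] with r hr
            apply ENNReal.ofReal_le_ofReal
            have hr0 : (0:ℝ) < r := lt_trans hy hr
            exact mul_le_of_le_one_right (Real.rpow_nonneg hr0.le _) (min_le_right _ _)
        _ = ENNReal.ofReal (∫ r in Ioi c⁻¹, r^(α-1)) := by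
            rw [ofReal_integral_eq_lintegral_ofReal]
            · exact integrableOn_Ioi_rpow_of_lt (by linarith) hy
            · filter_upwards [ae_restrict_mem measurableSet_Ioi] with r hr
              exact Real.rpow_nonneg (lt_trans hy hr).le _
        _ = ENNReal.ofReal (-((c⁻¹)^α)/α) := by
            rw [integral_Ioi_rpow_of_lt (by linarith : α - 1 < -1) hy,
              show α-1+1 = α by ring]
    calc _ ≤ ENNReal.ofReal (c^b * ((c⁻¹)^(α+b)/(α+b))) + ENNReal.ofReal (-((c⁻¹)^α)/α) :=
          add_le_add hB1 hB2
      _ = ENNReal.ofReal (c^b * ((c⁻¹)^(α+b)/(α+b)) + -((c⁻¹)^α)/α) := by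
          rw [← ENNReal.ofReal_add]
          · positivity
          · have h1' : 0 ≤ (c⁻¹)^α := Real.rpow_nonneg hy.le _
            have h2' : α < 0 := hα0
            rw [neg_div]
            exact neg_nonneg.mpr (div_nonpos_of_nonneg_of_nonpos h1' h2'.le)
      _ = ENNReal.ofReal (c ^ (-α) * D) := by
          congr 1
          have hcb : c^b * (c⁻¹)^(α+b) = c^(-α) := by
            rw [← Real.rpow_neg_one c, ← Real.rpow_mul hc0.le, ← Real.rpow_add hc0,
              show b + -1*(α+b) = -α by ring]
          have hca : (c⁻¹)^α = c^(-α) := by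
            rw [← Real.rpow_neg_one c, ← Real.rpow_mul hc0.le, show (-1)*α = -α by ring]
          calc c^b * ((c⁻¹)^(α+b)/(α+b)) + -((c⁻¹)^α)/α
              = (c^b * (c⁻¹)^(α+b))*(α+b)⁻¹ - ((c⁻¹)^α)*α⁻¹ := by ring
            _ = c^(-α)*(α+b)⁻¹ - c^(-α)*α⁻¹ := by rw [hcb, hca]
            _ = c^(-α) * D := by rw [hDdef]; ring
  -- main chain
  refine le_trans (aux_int_le_lint (volume.restrict (Ioo 0 T))
    (fun t => ∫ x : EuclideanSpace ℝ (Fin d), F t x) (fun t => integral_nonneg (hFnn t))) ?_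
  apply ENNReal.toReal_le_of_le_ofReal (by positivity)
  calc ∫⁻ t in Ioo (0:ℝ) T, ENNReal.ofReal (∫ x : EuclideanSpace ℝ (Fin d), F t x)
      ≤ ∫⁻ t in Ioo (0:ℝ) T, ∫⁻ x : EuclideanSpace ℝ (Fin d), ENNReal.ofReal (F t x) :=
        lintegral_mono fun t => le_trans
          (ENNReal.ofReal_le_ofReal (aux_int_le_lint volume (F t) (hFnn t)))
          ENNReal.ofReal_toReal_le
    _ ≤ ∫⁻ t in Ioi (0:ℝ), ∫⁻ x : EuclideanSpace ℝ (Fin d), ENNReal.ofReal (F t x) :=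
        lintegral_mono' (Measure.restrict_mono Ioo_subset_Ioi_self le_rfl) le_rfl
    _ = ∫⁻ x : EuclideanSpace ℝ (Fin d), ∫⁻ t in Ioi (0:ℝ), ENNReal.ofReal (F t x) :=
        lintegral_lintegral_swap hFm.aemeasurable
    _ = ∫⁻ x : EuclideanSpace ℝ (Fin d), ENNReal.ofReal (φ ‖x‖) := lintegral_congr key
    _ = S * ∫⁻ r in Ioi (0:ℝ),
          ENNReal.ofReal (r ^ (Module.finrank ℝ (EuclideanSpace ℝ (Fin d)) - 1)) *
          ENNReal.ofReal (φ r) :=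
        aux_lintegral_fun_norm_addHaar volume _ hφm
    _ = S * ((∫⁻ r in Ioi (0:ℝ), ENNReal.ofReal (r ^ (α-1) * min ((c*r)^b) 1)) *
          ENNReal.ofReal K) := by
        rw [← lintegral_mul_const' _ _ ENNReal.ofReal_ne_top]
        congr 1
        apply setLIntegral_congr_fun measurableSet_Ioi
        intro r hr
        have hr0 : (0:ℝ) < r := hr
        beta_reduce
        rw [← ENNReal.ofReal_mul (mul_nonneg (Real.rpow_nonneg hr0.le _)
          (le_min (Real.rpow_nonneg (by positivity) _) zero_le_one)),
          ← ENNReal.ofReal_mul (pow_nonneg hr0.le _)]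
        congr 1
        rw [finrank_euclideanSpace_fin, hφdef]
        simp only []
        rw [← Real.rpow_natCast r (d-1), Nat.cast_sub hd, Nat.cast_one]
        calc r ^ ((d:ℝ) - 1) * (r^a * min ((c*r)^b) 1 * (r^(-(1/H)) * K))
            = (r ^ ((d:ℝ)-1) * r^a * r^(-(1/H))) * (min ((c*r)^b) 1 * K) := by ring
          _ = r ^ ((d:ℝ)-1+a+(-(1/H))) * (min ((c*r)^b) 1 * K) := by
              rw [← Real.rpow_add hr0, ← Real.rpow_add hr0]
          _ = r ^ (α-1) * min ((c*r)^b) 1 * K := by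
              rw [show (d:ℝ)-1+a+(-(1/H)) = α - 1 by rw [hαdef]; ring]; ring
    _ ≤ S * (ENNReal.ofReal (c ^ (-α) * D) * ENNReal.ofReal K) := by
        gcongr
    _ = ENNReal.ofReal (S.toReal * (c ^ (-α) * D * K)) := by
        rw [← ENNReal.ofReal_mul (show (0:ℝ) ≤ c ^ (-α) * D by positivity)]
        conv_lhs => rw [← ENNReal.ofReal_toReal hS_ne_top]
        rw [← ENNReal.ofReal_mul ENNReal.toReal_nonneg]
    _ ≤ ENNReal.ofReal (S.toReal * D * K * γ ^ (-(min (1 / H - a - ↑d) b)) *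
          ε ^ (-(α / 2))) := by
        apply ENNReal.ofReal_le_ofReal
        have hc_eq : c ^ (-α) = γ ^ α * ε ^ (-(α/2)) := by
          rw [hcdef, Real.mul_rpow (inv_nonneg.mpr hγ0.le) (Real.sqrt_nonneg _)]
          congr 1
          · rw [← Real.rpow_neg_one γ, ← Real.rpow_mul hγ0.le, show (-1)*(-α) = α by ring]
          · rw [Real.sqrt_eq_rpow, ← Real.rpow_mul hε0.le, show 1/2*(-α) = -(α/2) by ring]
        rw [hc_eq]
        have hγle : γ ^ α ≤ γ ^ (-(min (1 / H - a - ↑d) b)) := by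
          apply Real.rpow_le_rpow_of_exponent_le hγ
          have := min_le_left (1 / H - a - (d:ℝ)) b
          rw [hαdef]; linarith
        calc S.toReal * (γ ^ α * ε ^ (-(α/2)) * D * K)
            = (S.toReal * D * K * ε ^ (-(α/2))) * (γ ^ α) := by ring
          _ ≤ (S.toReal * D * K * ε ^ (-(α/2))) * (γ ^ (-(min (1 / H - a - ↑d) b))) := by
              apply mul_le_mul_of_nonneg_left hγle
              positivity
          _ = S.toReal * D * K * γ ^ (-(min (1 / H - a - ↑d) b)) * ε ^ (-(α / 2)) := by ring
end

section
/- Let H ∈ (0,1), d ≥ 1, σ > 0, a ≥ 0, b > 0 with 1 − 2Hb < H(2a+d) < 1, and T > 0. Define ℓ_ε = ε^{(2a+d−1/H)/4}. Then lim_{ε↓0} ℓ_ε^2 ∫_{t₀}^T ∫_{R^d} (min(|ε^{1/2}x|, 1))^{2b} |x|^{2a} e^{−(σ/2)|x|^2 s^{2H}} dx ds = 0 whenever the lower limit t₀ = t₀(ε) = t·(log(1+ε^{−1/2}))^{−α} with fixed t ∈ (0,T] and α ∈ (0,1). -/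
open MeasureTheory Real Set Filter


-- Lemma A: polynomial bounded by exponential
lemma auxA {c p : ℝ} (hc : 0 < c) (hp : 0 ≤ p) :
    ∃ C : ℝ, 0 ≤ C ∧ ∀ r : ℝ, 0 ≤ r → r ^ p ≤ C * Real.exp (c * r ^ 2) := by
  set n : ℕ := ⌈p⌉₊ with hn
  refine ⟨1 + n.factorial / c ^ n, by positivity, fun r hr => ?_⟩
  have h1 : (1:ℝ) ≤ Real.exp (c * r ^ 2) := by
    rw [← Real.exp_zero]; exact Real.exp_le_exp.2 (by positivity)
  have key : r ^ p ≤ 1 + (r ^ 2) ^ n := by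
    rcases le_or_gt r 1 with h | h
    · have : r ^ p ≤ 1 := Real.rpow_le_one hr h hp
      nlinarith [pow_nonneg (sq_nonneg r) n]
    · have h2 : r ^ p ≤ r ^ ((2 * n : ℕ) : ℝ) := by
        apply Real.rpow_le_rpow_of_exponent_le h.le
        push_cast
        have := Nat.le_ceil p
        nlinarith [this, hp]
      have h3 : r ^ ((2 * n : ℕ) : ℝ) = (r ^ 2) ^ n := by
        rw [Real.rpow_natCast, pow_mul]
      nlinarith [h2, h3.symm.le]
  have h4 : (c * r ^ 2) ^ n / n.factorial ≤ Real.exp (c * r ^ 2) := by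
    have hx : 0 ≤ c * r ^ 2 := by positivity
    calc (c * r ^ 2) ^ n / n.factorial
        ≤ ∑ i ∈ Finset.range (n + 1), (c * r ^ 2) ^ i / i.factorial := by
          refine Finset.single_le_sum (f := fun i => (c * r ^ 2) ^ i / i.factorial)
            (fun i _ => by positivity) (Finset.self_mem_range_succ n)
      _ ≤ Real.exp (c * r ^ 2) := Real.sum_le_exp_of_nonneg hx _
  have h5 : (r ^ 2) ^ n ≤ n.factorial / c ^ n * Real.exp (c * r ^ 2) := by
    rw [div_mul_eq_mul_div, le_div_iff₀ (by positivity)]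
    have := (div_le_iff₀ (by positivity : (0:ℝ) < (n.factorial:ℝ))).1 h4
    calc (r ^ 2) ^ n * c ^ n = (c * r ^ 2) ^ n := by rw [mul_pow]; ring
      _ ≤ Real.exp (c * r ^ 2) * n.factorial := this
      _ = n.factorial * Real.exp (c * r ^ 2) := by ring
  calc r ^ p ≤ 1 + (r ^ 2) ^ n := key
    _ ≤ 1 * Real.exp (c * r ^ 2) + n.factorial / c ^ n * Real.exp (c * r ^ 2) := by
        refine add_le_add (by linarith) h5
    _ = (1 + n.factorial / c ^ n) * Real.exp (c * r ^ 2) := by ring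


lemma auxB (d : ℕ) {c : ℝ} (hc : 0 < c) :
    Integrable (fun x : EuclideanSpace ℝ (Fin d) => Real.exp (-c * ‖x‖ ^ 2)) := by
  have h := GaussianFourier.integrable_cexp_neg_mul_sq_norm_add
    (V := EuclideanSpace ℝ (Fin d)) (b := (c : ℂ)) (by simpa using hc) 0 0
  have h2 := h.re
  refine h2.congr (Filter.Eventually.of_forall fun x => ?_)
  have : (-(c:ℂ) * (‖x‖:ℂ) ^ 2 + 0 * (inner ℝ 0 x : ℝ)) = ((-c * ‖x‖ ^ 2 : ℝ) : ℂ) := by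
    push_cast; ring
  show Complex.re (Complex.exp _) = _
  rw [this]
  exact Complex.exp_ofReal_re _

lemma auxC (d : ℕ) {c p : ℝ} (hc : 0 < c) (hp : 0 ≤ p) :
    Integrable (fun x : EuclideanSpace ℝ (Fin d) => ‖x‖ ^ p * Real.exp (-c * ‖x‖ ^ 2)) := by
  obtain ⟨C, hC0, hC⟩ := auxA (half_pos hc) hp
  have hmeas : AEStronglyMeasurable
      (fun x : EuclideanSpace ℝ (Fin d) => ‖x‖ ^ p * Real.exp (-c * ‖x‖ ^ 2)) volume := by
    apply Continuous.aestronglyMeasurable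
    exact (continuous_norm.rpow_const fun x => Or.inr hp).mul
      (Real.continuous_exp.comp (by continuity))
  refine Integrable.mono' ((auxB d (half_pos hc)).const_mul C) hmeas
    (Filter.Eventually.of_forall fun x => ?_)
  have h1 : ‖x‖ ^ p ≤ C * Real.exp (c / 2 * ‖x‖ ^ 2) := hC _ (norm_nonneg x)
  have h2 : (0:ℝ) < Real.exp (-c * ‖x‖ ^ 2) := Real.exp_pos _
  rw [Real.norm_eq_abs, abs_of_nonneg (by positivity)]
  calc ‖x‖ ^ p * Real.exp (-c * ‖x‖ ^ 2)
      ≤ (C * Real.exp (c / 2 * ‖x‖ ^ 2)) * Real.exp (-c * ‖x‖ ^ 2) := by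
        exact mul_le_mul_of_nonneg_right h1 h2.le
    _ = C * Real.exp (-(c / 2) * ‖x‖ ^ 2) := by
        rw [mul_assoc, ← Real.exp_add]; ring_nf

lemma auxD (d : ℕ) {c p : ℝ} (hc : 0 < c) (hp : 0 ≤ p) :
    ∫ x : EuclideanSpace ℝ (Fin d), ‖x‖ ^ p * Real.exp (-c * ‖x‖ ^ 2)
      = c ^ (-(p + d) / 2) *
        ∫ x : EuclideanSpace ℝ (Fin d), ‖x‖ ^ p * Real.exp (-‖x‖ ^ 2) := by
  have hsc : (0:ℝ) < Real.sqrt c := Real.sqrt_pos.2 hc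
  have key := MeasureTheory.Measure.integral_comp_smul (volume : Measure (EuclideanSpace ℝ (Fin d)))
    (fun y => ‖y‖ ^ p * Real.exp (-‖y‖ ^ 2)) (Real.sqrt c)
  have hnorm : ∀ x : EuclideanSpace ℝ (Fin d), ‖Real.sqrt c • x‖ = Real.sqrt c * ‖x‖ := by
    intro x; rw [norm_smul, Real.norm_eq_abs, abs_of_nonneg (Real.sqrt_nonneg c)]
  have lhs_eq : (∫ x : EuclideanSpace ℝ (Fin d),
      (fun y => ‖y‖ ^ p * Real.exp (-‖y‖ ^ 2)) (Real.sqrt c • x))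
      = (Real.sqrt c) ^ p * ∫ x : EuclideanSpace ℝ (Fin d), ‖x‖ ^ p * Real.exp (-c * ‖x‖ ^ 2) := by
    rw [← MeasureTheory.integral_const_mul]
    congr 1 with x
    show ‖Real.sqrt c • x‖ ^ p * Real.exp (-‖Real.sqrt c • x‖ ^ 2) = _
    rw [hnorm x, Real.mul_rpow (Real.sqrt_nonneg c) (norm_nonneg x)]
    have : (Real.sqrt c * ‖x‖) ^ 2 = c * ‖x‖ ^ 2 := by
      rw [mul_pow, Real.sq_sqrt hc.le]
    rw [this]; ring
  rw [lhs_eq] at key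
  have hfr : Module.finrank ℝ (EuclideanSpace ℝ (Fin d)) = d := finrank_euclideanSpace_fin
  rw [hfr, smul_eq_mul, abs_of_nonneg (by positivity)] at key
  have hA : (Real.sqrt c) ^ p ≠ 0 := (Real.rpow_pos_of_pos hsc p).ne'
  have hJ : ∫ x : EuclideanSpace ℝ (Fin d), ‖x‖ ^ p * Real.exp (-c * ‖x‖ ^ 2)
      = ((Real.sqrt c) ^ p)⁻¹ * ((Real.sqrt c ^ (d:ℕ))⁻¹ *
        ∫ x : EuclideanSpace ℝ (Fin d), ‖x‖ ^ p * Real.exp (-‖x‖ ^ 2)) := by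
    field_simp at key ⊢
    linarith [key]
  rw [hJ]
  have e0 : Real.sqrt c = c ^ ((1:ℝ)/2) := Real.sqrt_eq_rpow c
  have e1 : ((Real.sqrt c) ^ p)⁻¹ = c ^ (-(p/2)) := by
    rw [e0, ← Real.rpow_mul hc.le, ← Real.rpow_neg hc.le]
    congr 1; ring
  have e2 : ((Real.sqrt c) ^ (d:ℕ))⁻¹ = c ^ (-((d:ℝ)/2)) := by
    rw [e0, ← Real.rpow_natCast (c ^ ((1:ℝ)/2)) d, ← Real.rpow_mul hc.le, ← Real.rpow_neg hc.le]
    congr 1; ring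
  rw [e1, e2, ← mul_assoc, ← Real.rpow_add hc]
  rw [show -(p/2) + -((d:ℝ)/2) = -(p+(d:ℝ))/2 by ring]


lemma auxE0 : Tendsto (fun ε : ℝ => ε ^ (-(1:ℝ)/2)) (nhdsWithin 0 (Ioi 0)) atTop := by
  have h1 : Tendsto (fun ε : ℝ => ε ^ ((1:ℝ)/2)) (nhdsWithin 0 (Ioi 0)) (nhdsWithin 0 (Ioi 0)) := by
    apply tendsto_nhdsWithin_of_tendsto_nhds_of_eventually_within
    · have hc : ContinuousAt (fun x : ℝ => x ^ ((1:ℝ)/2)) 0 :=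
        Real.continuousAt_rpow_const 0 _ (Or.inr (by norm_num))
      have := hc.tendsto
      rw [Real.zero_rpow (by norm_num : (1:ℝ)/2 ≠ 0)] at this
      exact this.mono_left nhdsWithin_le_nhds
    · filter_upwards [self_mem_nhdsWithin] with ε (hε : ε ∈ Ioi 0)
      exact Real.rpow_pos_of_pos hε _
  have h2 := tendsto_inv_nhdsGT_zero.comp h1
  refine h2.congr' ?_
  filter_upwards [self_mem_nhdsWithin] with ε (hε : ε ∈ Ioi 0)
  simp only [Function.comp_apply]
  rw [← Real.rpow_neg (le_of_lt hε)]
  norm_num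

lemma auxE {δ m : ℝ} (hδ : 0 < δ) (hm : 0 ≤ m) :
    Tendsto (fun ε : ℝ => ε ^ δ * (Real.log (1 + ε ^ (-(1:ℝ)/2))) ^ m)
      (nhdsWithin 0 (Ioi 0)) (nhds 0) := by
  have h2δ : (0:ℝ) < 2 * δ := by linarith
  have hA : Tendsto (fun u : ℝ => u ^ (-(2*δ)) * (Real.log (1 + u)) ^ m) atTop (nhds 0) := by
    have h3 : Tendsto (fun u : ℝ => Real.log u ^ m / u ^ (2*δ)) atTop (nhds 0) :=
      (isLittleO_log_rpow_rpow_atTop m h2δ).tendsto_div_nhds_zero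
    have h4 : Tendsto (fun u : ℝ => (2:ℝ) ^ m * (Real.log u ^ m / u ^ (2*δ))) atTop (nhds 0) := by
      simpa using h3.const_mul ((2:ℝ) ^ m)
    apply squeeze_zero' ?_ ?_ h4
    · filter_upwards [eventually_ge_atTop (0:ℝ)] with u hu
      have : (0:ℝ) ≤ Real.log (1 + u) := Real.log_nonneg (by linarith)
      positivity
    · filter_upwards [eventually_ge_atTop (2:ℝ)] with u hu
      have hu0 : (0:ℝ) < u := by linarith
      have hlogu : 0 ≤ Real.log u := Real.log_nonneg (by linarith)
      have hlog : Real.log (1 + u) ≤ 2 * Real.log u := by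
        have h5 : 1 + u ≤ u ^ 2 := by nlinarith
        have := Real.log_le_log (by linarith : (0:ℝ) < 1 + u) h5
        rwa [Real.log_pow, Nat.cast_ofNat] at this
      have hstep : (Real.log (1 + u)) ^ m ≤ (2:ℝ) ^ m * Real.log u ^ m := by
        rw [← Real.mul_rpow (by norm_num) hlogu]
        exact Real.rpow_le_rpow (Real.log_nonneg (by linarith)) hlog hm
      calc u ^ (-(2*δ)) * (Real.log (1 + u)) ^ m
          ≤ u ^ (-(2*δ)) * ((2:ℝ) ^ m * Real.log u ^ m) :=
            mul_le_mul_of_nonneg_left hstep (Real.rpow_nonneg hu0.le _)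
        _ = (2:ℝ) ^ m * (Real.log u ^ m / u ^ (2*δ)) := by
            rw [Real.rpow_neg hu0.le, div_eq_mul_inv]; ring
  have := (hA.comp auxE0)
  refine this.congr' ?_
  filter_upwards [self_mem_nhdsWithin] with ε (hε : ε ∈ Ioi 0)
  simp only [Function.comp_apply]
  congr 1
  rw [← Real.rpow_mul (le_of_lt hε)]
  congr 1; ring


/-- In the regime `1 - 2Hb < H(2a+d) < 1`, with `ℓ_ε = ε^{(2a+d-1/H)/4}`,
`ℓ_ε² ∫_{t (log(1+ε^{-1/2}))^{-α}}^T ∫_{ℝ^d} (min(|ε^{1/2}x|,1))^{2b} |x|^{2a}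
 e^{-(σ/2)|x|² s^{2H}} dx ds → 0` as `ε ↓ 0`. -/
theorem statement6 (d : ℕ) (hd : 1 ≤ d) (H σ a b t T α : ℝ)
    (hH : 0 < H) (hH1 : H < 1) (hσ : 0 < σ) (ha : 0 ≤ a) (hb : 0 < b)
    (h1 : 1 - 2 * H * b < H * (2 * a + d)) (h2 : H * (2 * a + d) < 1)
    (ht : 0 < t) (htT : t ≤ T) (hα : 0 < α) (hα1 : α < 1) :
    Tendsto (fun ε : ℝ =>
      ε ^ ((2 * a + d - 1 / H) / 2) *
        ∫ s in Ioo (t * (Real.log (1 + ε ^ (-(1:ℝ) / 2))) ^ (-α)) T,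
          ∫ x : EuclideanSpace ℝ (Fin d),
            (min (Real.sqrt ε * ‖x‖) 1) ^ (2 * b) * ‖x‖ ^ (2 * a) *
              Real.exp (-(σ / 2) * ‖x‖ ^ 2 * s ^ (2 * H)))
      (nhdsWithin 0 (Ioi 0)) (nhds 0) := by
  have hT : 0 < T := lt_of_lt_of_le ht htT
  set p : ℝ := 2 * a + 2 * b with hp_def
  have hp : 0 ≤ p := by positivity
  set q : ℝ := (p + d) / 2 with hq_def
  have hq : 0 < q := by
    have : (1:ℝ) ≤ d := by exact_mod_cast hd
    simp only [hq_def]; positivity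
  set I1 : ℝ := ∫ x : EuclideanSpace ℝ (Fin d), ‖x‖ ^ p * Real.exp (-‖x‖ ^ 2) with hI1_def
  have hI1 : 0 ≤ I1 := integral_nonneg fun x => by positivity
  set γ : ℝ := (2 * a + d - 1 / H) / 2 with hγ_def
  set δ : ℝ := γ + b with hδ_def
  have hδ : 0 < δ := by
    have h1' : 1 / H < 2 * a + d + 2 * b := by
      rw [div_lt_iff₀ hH]; nlinarith
    simp only [hδ_def, hγ_def]; linarith
  set m : ℝ := 2 * H * q * α with hm_def
  have hm : 0 ≤ m := by positivity
  set K : ℝ := T * (σ / 2) ^ (-q) * t ^ (-(2 * H * q)) * I1 with hK_def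
  have hK : 0 ≤ K := by positivity
  have hlim : Tendsto (fun ε : ℝ => K * (ε ^ δ * (Real.log (1 + ε ^ (-(1:ℝ)/2))) ^ m))
      (nhdsWithin 0 (Ioi 0)) (nhds 0) := by
    simpa using (auxE hδ hm).const_mul K
  refine squeeze_zero' ?_ ?_ hlim
  · filter_upwards [self_mem_nhdsWithin] with ε (hε : ε ∈ Ioi 0)
    refine mul_nonneg (Real.rpow_nonneg (le_of_lt hε) _) ?_
    refine setIntegral_nonneg measurableSet_Ioo fun s _ => integral_nonneg fun x => ?_
    have h0 : (0:ℝ) ≤ min (Real.sqrt ε * ‖x‖) 1 := le_min (by positivity) one_pos.le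
    exact mul_nonneg (mul_nonneg (Real.rpow_nonneg h0 _)
      (Real.rpow_nonneg (norm_nonneg x) _)) (Real.exp_pos _).le
  · filter_upwards [self_mem_nhdsWithin] with ε (hε : (0:ℝ) < ε)
    set L : ℝ := Real.log (1 + ε ^ (-(1:ℝ)/2)) with hL_def
    have hL : 0 < L := Real.log_pos (by
      have := Real.rpow_pos_of_pos hε (-(1:ℝ)/2); linarith)
    set t₀ : ℝ := t * L ^ (-α) with ht₀_def
    have ht₀ : 0 < t₀ := mul_pos ht (Real.rpow_pos_of_pos hL _)
    -- inner integral bound, uniform in s ∈ Ioo t₀ T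
    set M : ℝ := ε ^ b * ((σ / 2) * t₀ ^ (2 * H)) ^ (-q) * I1 with hM_def
    have hct₀ : 0 < σ / 2 * t₀ ^ (2 * H) := by
      have := Real.rpow_pos_of_pos ht₀ (2 * H); positivity
    have hM0 : 0 ≤ M := by
      have h1 := Real.rpow_nonneg (le_of_lt hε) b
      have h2 := Real.rpow_nonneg (le_of_lt hct₀) (-q)
      positivity
    have hinner : ∀ s ∈ Ioo t₀ T,
        ‖∫ x : EuclideanSpace ℝ (Fin d),
            (min (Real.sqrt ε * ‖x‖) 1) ^ (2 * b) * ‖x‖ ^ (2 * a) *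
              Real.exp (-(σ / 2) * ‖x‖ ^ 2 * s ^ (2 * H))‖ ≤ M := by
      intro s hs
      have hs0 : 0 < s := lt_trans ht₀ hs.1
      have hcs : 0 < σ / 2 * s ^ (2 * H) := by
        have := Real.rpow_pos_of_pos hs0 (2 * H); positivity
      have hIneq : ∫ x : EuclideanSpace ℝ (Fin d),
            (min (Real.sqrt ε * ‖x‖) 1) ^ (2 * b) * ‖x‖ ^ (2 * a) *
              Real.exp (-(σ / 2) * ‖x‖ ^ 2 * s ^ (2 * H))
          ≤ ε ^ b * ∫ x : EuclideanSpace ℝ (Fin d),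
              ‖x‖ ^ p * Real.exp (-(σ / 2 * s ^ (2 * H)) * ‖x‖ ^ 2) := by
        rw [← MeasureTheory.integral_const_mul]
        refine integral_mono_of_nonneg (Eventually.of_forall fun x => ?_)
          ((auxC d hcs hp).const_mul _) (Eventually.of_forall fun x => ?_)
        · have h0 : (0:ℝ) ≤ min (Real.sqrt ε * ‖x‖) 1 := le_min (by positivity) one_pos.le
          exact mul_nonneg (mul_nonneg (Real.rpow_nonneg h0 _)
            (Real.rpow_nonneg (norm_nonneg x) _)) (Real.exp_pos _).le
        · show (min (Real.sqrt ε * ‖x‖) 1) ^ (2 * b) * ‖x‖ ^ (2 * a) *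
              Real.exp (-(σ / 2) * ‖x‖ ^ 2 * s ^ (2 * H))
            ≤ ε ^ b * (‖x‖ ^ p * Real.exp (-(σ / 2 * s ^ (2 * H)) * ‖x‖ ^ 2))
          have hexp : Real.exp (-(σ / 2) * ‖x‖ ^ 2 * s ^ (2 * H))
              = Real.exp (-(σ / 2 * s ^ (2 * H)) * ‖x‖ ^ 2) := by ring_nf
          rw [hexp]
          have h0 : (0:ℝ) ≤ min (Real.sqrt ε * ‖x‖) 1 := le_min (by positivity) one_pos.le
          have hmin : (min (Real.sqrt ε * ‖x‖) 1) ^ (2 * b)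
              ≤ (Real.sqrt ε * ‖x‖) ^ (2 * b) :=
            Real.rpow_le_rpow h0 (min_le_left _ _) (by positivity)
          have hsplit : (Real.sqrt ε * ‖x‖) ^ (2 * b) = ε ^ b * ‖x‖ ^ (2 * b) := by
            rw [Real.mul_rpow (Real.sqrt_nonneg ε) (norm_nonneg x),
              Real.sqrt_eq_rpow, ← Real.rpow_mul (le_of_lt hε)]
            rw [show (1:ℝ)/2 * (2*b) = b by ring]
          have hcomb : ‖x‖ ^ (2 * b) * ‖x‖ ^ (2 * a) = ‖x‖ ^ p := by
            rw [hp_def, ← Real.rpow_add' (norm_nonneg x) (by positivity)]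
            ring_nf
          calc (min (Real.sqrt ε * ‖x‖) 1) ^ (2 * b) * ‖x‖ ^ (2 * a) *
                Real.exp (-(σ / 2 * s ^ (2 * H)) * ‖x‖ ^ 2)
              ≤ (Real.sqrt ε * ‖x‖) ^ (2 * b) * ‖x‖ ^ (2 * a) *
                Real.exp (-(σ / 2 * s ^ (2 * H)) * ‖x‖ ^ 2) := by
                refine mul_le_mul_of_nonneg_right (mul_le_mul_of_nonneg_right hmin
                  (Real.rpow_nonneg (norm_nonneg x) _)) (Real.exp_pos _).le
            _ = ε ^ b * (‖x‖ ^ p * Real.exp (-(σ / 2 * s ^ (2 * H)) * ‖x‖ ^ 2)) := by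
                rw [hsplit, ← hcomb]; ring
      have hval : ∫ x : EuclideanSpace ℝ (Fin d),
            ‖x‖ ^ p * Real.exp (-(σ / 2 * s ^ (2 * H)) * ‖x‖ ^ 2)
          = (σ / 2 * s ^ (2 * H)) ^ (-q) * I1 := by
        rw [auxD d hcs hp, hI1_def, hq_def]
        congr 2
        ring
      have hmono : (σ / 2 * s ^ (2 * H)) ^ (-q) ≤ (σ / 2 * t₀ ^ (2 * H)) ^ (-q) := by
        refine Real.rpow_le_rpow_of_nonpos hct₀ ?_ (by linarith)
        exact mul_le_mul_of_nonneg_left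
          (Real.rpow_le_rpow (le_of_lt ht₀) hs.1.le (by positivity)) (by positivity)
      have hnn : (0:ℝ) ≤ ∫ x : EuclideanSpace ℝ (Fin d),
            (min (Real.sqrt ε * ‖x‖) 1) ^ (2 * b) * ‖x‖ ^ (2 * a) *
              Real.exp (-(σ / 2) * ‖x‖ ^ 2 * s ^ (2 * H)) := by
        refine integral_nonneg fun x => ?_
        have h0 : (0:ℝ) ≤ min (Real.sqrt ε * ‖x‖) 1 := le_min (by positivity) one_pos.le
        exact mul_nonneg (mul_nonneg (Real.rpow_nonneg h0 _)
          (Real.rpow_nonneg (norm_nonneg x) _)) (Real.exp_pos _).le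
      rw [Real.norm_eq_abs, abs_of_nonneg hnn]
      calc _ ≤ ε ^ b * ((σ / 2 * s ^ (2 * H)) ^ (-q) * I1) := by rw [← hval]; exact hIneq
        _ ≤ ε ^ b * ((σ / 2 * t₀ ^ (2 * H)) ^ (-q) * I1) := by
            refine mul_le_mul_of_nonneg_left (mul_le_mul_of_nonneg_right hmono hI1)
              (Real.rpow_nonneg (le_of_lt hε) _)
        _ = M := by rw [hM_def]; ring
    -- outer integral bound
    have houter : ‖∫ s in Ioo t₀ T,
          ∫ x : EuclideanSpace ℝ (Fin d),
            (min (Real.sqrt ε * ‖x‖) 1) ^ (2 * b) * ‖x‖ ^ (2 * a) *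
              Real.exp (-(σ / 2) * ‖x‖ ^ 2 * s ^ (2 * H))‖
        ≤ M * (volume (Ioo t₀ T)).toReal :=
      norm_setIntegral_le_of_norm_le_const (measure_Ioo_lt_top) hinner
    have hvol : (volume (Ioo t₀ T)).toReal ≤ T := by
      rw [Real.volume_Ioo, ENNReal.toReal_ofReal']
      apply max_le <;> [linarith; linarith]
    have houter2 : (∫ s in Ioo t₀ T,
          ∫ x : EuclideanSpace ℝ (Fin d),
            (min (Real.sqrt ε * ‖x‖) 1) ^ (2 * b) * ‖x‖ ^ (2 * a) *
              Real.exp (-(σ / 2) * ‖x‖ ^ 2 * s ^ (2 * H))) ≤ M * T := by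
      calc _ ≤ ‖∫ s in Ioo t₀ T, ∫ x : EuclideanSpace ℝ (Fin d),
            (min (Real.sqrt ε * ‖x‖) 1) ^ (2 * b) * ‖x‖ ^ (2 * a) *
              Real.exp (-(σ / 2) * ‖x‖ ^ 2 * s ^ (2 * H))‖ := le_abs_self _
        _ ≤ M * (volume (Ioo t₀ T)).toReal := houter
        _ ≤ M * T := mul_le_mul_of_nonneg_left hvol hM0
    -- final algebra
    have hfinal : ε ^ γ * (M * T) = K * (ε ^ δ * L ^ m) := by
      have e1 : (σ / 2 * t₀ ^ (2 * H)) ^ (-q)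
          = (σ / 2) ^ (-q) * (t ^ (-(2 * H * q)) * L ^ m) := by
        rw [Real.mul_rpow (by positivity) (Real.rpow_nonneg (le_of_lt ht₀) _),
          ← Real.rpow_mul (le_of_lt ht₀), ht₀_def,
          Real.mul_rpow (le_of_lt ht) (Real.rpow_nonneg (le_of_lt hL) _),
          ← Real.rpow_mul (le_of_lt hL)]
        rw [show 2 * H * -q = -(2 * H * q) by ring,
          show -α * -(2 * H * q) = m by rw [hm_def]; ring]
      rw [hM_def, e1, hK_def, hδ_def, Real.rpow_add hε]
      ring
    calc ε ^ γ * (∫ s in Ioo t₀ T,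
          ∫ x : EuclideanSpace ℝ (Fin d),
            (min (Real.sqrt ε * ‖x‖) 1) ^ (2 * b) * ‖x‖ ^ (2 * a) *
              Real.exp (-(σ / 2) * ‖x‖ ^ 2 * s ^ (2 * H)))
        ≤ ε ^ γ * (M * T) :=
          mul_le_mul_of_nonneg_left houter2 (Real.rpow_nonneg (le_of_lt hε) _)
      _ = K * (ε ^ δ * L ^ m) := hfinal
end

section
/- Let H ∈ (0,1), d ≥ 1, a ≥ 0, b > 0 with 1 − 2Hb ≤ H(2a+d) < 1, and T > 0. Then there exists C > 0 such that for all ε ∈ (0,1) and all t ∈ (0,T], ε^{−(2a+d−1/H)/4} ∫_0^t ∫_{R^d} |x|^a min(|ε^{1/2}x|^b, 1) e^{−|x|^2 s^{2H}} dx ds ≤ C t^{(1−Hd)/2}. -/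
open MeasureTheory Real Set

lemma rpow_le_exp_mul {r a : ℝ} (hr : 0 ≤ r) (ha : 0 ≤ a) : r ^ a ≤ Real.exp (a * r) := by
  rcases hr.eq_or_lt with h0 | h0
  · rcases ha.eq_or_lt with h1 | h1
    · simp [← h1, ← h0]
    · rw [← h0, Real.zero_rpow h1.ne']
      positivity
  · rw [Real.rpow_def_of_pos h0]
    apply Real.exp_le_exp.2
    have hlog : Real.log r ≤ r := (Real.log_le_sub_one_of_pos h0).trans (by linarith)
    calc Real.log r * a ≤ r * a := by nlinarith
      _ = a * r := mul_comm _ _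

lemma gauss_integrable (d : ℕ) (a c : ℝ) (ha : 0 ≤ a) (hc : 0 < c) :
    Integrable (fun x : EuclideanSpace ℝ (Fin d) => ‖x‖ ^ a * Real.exp (-‖x‖ ^ 2 * c)) := by
  have hhalf : (0:ℝ) < c / 2 := by linarith
  have h1 : Integrable (fun x : EuclideanSpace ℝ (Fin d) => Real.exp (-(c/2) * ‖x‖ ^ 2)) := by
    have h := (GaussianFourier.integrable_cexp_neg_mul_sq_norm_add
      (V := EuclideanSpace ℝ (Fin d)) (b := ((c/2 : ℝ) : ℂ)) (by simpa using hhalf) 0 0).norm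
    convert h using 2 with x
    rw [Complex.norm_exp]
    norm_num [Complex.ofReal_pow]
    norm_cast
    exact Or.inl rfl
  have hmeas : AEStronglyMeasurable
      (fun x : EuclideanSpace ℝ (Fin d) => ‖x‖ ^ a * Real.exp (-‖x‖ ^ 2 * c)) volume := by
    apply Measurable.aestronglyMeasurable
    apply Measurable.mul
    · exact measurable_norm.pow_const a
    · exact (measurable_norm.pow_const 2 |>.neg.mul_const c).exp
  refine (h1.const_mul (Real.exp (a ^ 2 / (2 * c)))).mono' hmeas ?_
  filter_upwards with x
  have hn : (0:ℝ) ≤ ‖x‖ := norm_nonneg x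
  rw [Real.norm_eq_abs, abs_of_nonneg (by positivity)]
  have h2 : ‖x‖ ^ a ≤ Real.exp (a * ‖x‖) := rpow_le_exp_mul hn ha
  have h3 : ‖x‖ ^ a * Real.exp (-‖x‖ ^ 2 * c) ≤ Real.exp (a * ‖x‖ + -‖x‖ ^ 2 * c) := by
    rw [Real.exp_add]
    exact mul_le_mul_of_nonneg_right h2 (Real.exp_nonneg _)
  refine h3.trans ?_
  rw [← Real.exp_add]
  apply Real.exp_le_exp.2
  have key : a * ‖x‖ - (c/2) * ‖x‖ ^ 2 ≤ a ^ 2 / (2 * c) := by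
    rw [le_div_iff₀ (by linarith : (0:ℝ) < 2 * c)]
    nlinarith [sq_nonneg (c * ‖x‖ - a)]
  linarith

lemma gauss_scaling (d : ℕ) (a R : ℝ) (hR : 0 < R) :
    ∫ x : EuclideanSpace ℝ (Fin d), ‖x‖ ^ a * Real.exp (-‖x‖ ^ 2 * R ^ 2)
      = (R ^ a * R ^ d)⁻¹ *
        ∫ y : EuclideanSpace ℝ (Fin d), ‖y‖ ^ a * Real.exp (-‖y‖ ^ 2) := by
  have h := MeasureTheory.Measure.integral_comp_smul_of_nonneg
    (volume : Measure (EuclideanSpace ℝ (Fin d)))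
    (fun y : EuclideanSpace ℝ (Fin d) => ‖y‖ ^ a * Real.exp (-‖y‖ ^ 2)) R (hR := hR.le)
  have heq : ∀ x : EuclideanSpace ℝ (Fin d),
      (fun y : EuclideanSpace ℝ (Fin d) => ‖y‖ ^ a * Real.exp (-‖y‖ ^ 2)) (R • x)
        = R ^ a * (‖x‖ ^ a * Real.exp (-‖x‖ ^ 2 * R ^ 2)) := by
    intro x
    have hns : ‖R • x‖ = R * ‖x‖ := by
      rw [norm_smul, Real.norm_eq_abs, abs_of_pos hR]
    simp only [hns, Real.mul_rpow hR.le (norm_nonneg x)]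
    rw [mul_pow]
    ring_nf
  rw [funext heq, MeasureTheory.integral_const_mul, smul_eq_mul,
    finrank_euclideanSpace_fin] at h
  have hRa : (0:ℝ) < R ^ a := Real.rpow_pos_of_pos hR a
  field_simp at h ⊢
  simp only [mul_comm (R ^ 2)]
  linarith [h]


/-- For `1 - 2Hb ≤ H(2a+d) < 1`:
`ε^{-(2a+d-1/H)/4} ∫_0^t ∫_{ℝ^d} |x|^a min(|ε^{1/2}x|^b,1) e^{-|x|² s^{2H}} dx ds
  ≤ C t^{(1-Hd)/2}` for `ε ∈ (0,1)` and `t ∈ (0,T]`. -/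
theorem statement10 (d : ℕ) (hd : 1 ≤ d) (H a b T : ℝ)
    (hH : 0 < H) (hH1 : H < 1) (ha : 0 ≤ a) (hb : 0 < b)
    (h1 : 1 - 2 * H * b ≤ H * (2 * a + d)) (h2 : H * (2 * a + d) < 1) (hT : 0 < T) :
    ∃ C > (0:ℝ), ∀ ε : ℝ, 0 < ε → ε < 1 → ∀ t : ℝ, 0 < t → t ≤ T →
      ε ^ (-((2 * a + d - 1 / H) / 4)) *
        (∫ s in Ioo (0:ℝ) t, ∫ x : EuclideanSpace ℝ (Fin d),
          ‖x‖ ^ a * min ((Real.sqrt ε * ‖x‖) ^ b) 1 *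
            Real.exp (-‖x‖ ^ 2 * s ^ (2 * H))) ≤
        C * t ^ ((1 - H * d) / 2) := by
  have hHa : 0 ≤ H * a := mul_nonneg hH.le ha
  set q : ℝ := (1 - H * d) / 2 with hq
  set p : ℝ := 1 - H * (a + d) with hpdef
  have hp : 0 < p := by simp only [hpdef]; nlinarith
  have hδ : 0 ≤ p - q := by simp only [hpdef, hq]; nlinarith
  set I : ℝ := ∫ y : EuclideanSpace ℝ (Fin d), ‖y‖ ^ a * Real.exp (-‖y‖ ^ 2) with hIdef
  have hI : 0 ≤ I := integral_nonneg fun y => by positivity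
  refine ⟨I / p * T ^ (p - q) + 1, by positivity, ?_⟩
  intro ε hε hε1 t ht htT
  have hεr : ε ^ (-((2 * a + d - 1 / H) / 4)) ≤ 1 := by
    apply Real.rpow_le_one hε.le hε1.le
    have h3 : (2 * a + d) * H < 1 := by linarith [h2, mul_comm H (2 * a + (d:ℝ))]
    have h4 : 2 * a + (d:ℝ) < 1 / H := (lt_div_iff₀ hH).2 h3
    linarith
  set A : ℝ := ∫ s in Ioo (0:ℝ) t, ∫ x : EuclideanSpace ℝ (Fin d),
      ‖x‖ ^ a * min ((Real.sqrt ε * ‖x‖) ^ b) 1 *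
        Real.exp (-‖x‖ ^ 2 * s ^ (2 * H)) with hAdef
  have hinner_nonneg : ∀ s : ℝ, 0 ≤ ∫ x : EuclideanSpace ℝ (Fin d),
      ‖x‖ ^ a * min ((Real.sqrt ε * ‖x‖) ^ b) 1 *
        Real.exp (-‖x‖ ^ 2 * s ^ (2 * H)) := by
    intro s
    apply integral_nonneg
    intro x
    have h5 : (0:ℝ) ≤ min ((Real.sqrt ε * ‖x‖) ^ b) 1 :=
      le_min (Real.rpow_nonneg (by positivity) b) zero_le_one
    positivity
  have hA : 0 ≤ A := integral_nonneg fun s => hinner_nonneg s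
  have hint : IntegrableOn (fun s : ℝ => I * s ^ (-(H * (a + d)))) (Ioo 0 t) := by
    apply Integrable.const_mul
    have h6 : (-1:ℝ) < -(H * (a + d)) := by simp only [hpdef] at hp; nlinarith
    have h7 := intervalIntegral.intervalIntegrable_rpow' (a := 0) (b := t) h6
    rwa [intervalIntegrable_iff_integrableOn_Ioo_of_le ht.le] at h7
  have key : A ≤ I * (t ^ p / p) := by
    have hbound : A ≤ ∫ s in Ioo (0:ℝ) t, I * s ^ (-(H * (a + d))) := by
      apply integral_mono_of_nonneg
      · filter_upwards with s using hinner_nonneg s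
      · exact hint
      · filter_upwards [ae_restrict_mem measurableSet_Ioo] with s hs
        obtain ⟨hs0, hst⟩ := hs
        have hR : 0 < s ^ H := Real.rpow_pos_of_pos hs0 H
        have hsq : s ^ (2 * H) = (s ^ H) ^ 2 := by
          rw [← Real.rpow_natCast (s ^ H) 2, ← Real.rpow_mul hs0.le]
          norm_num
          ring_nf
        have step1 : (∫ x : EuclideanSpace ℝ (Fin d),
            ‖x‖ ^ a * min ((Real.sqrt ε * ‖x‖) ^ b) 1 *
              Real.exp (-‖x‖ ^ 2 * s ^ (2 * H)))
            ≤ ∫ x : EuclideanSpace ℝ (Fin d),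
              ‖x‖ ^ a * Real.exp (-‖x‖ ^ 2 * (s ^ H) ^ 2) := by
          apply integral_mono_of_nonneg
          · filter_upwards with x
            have h5 : (0:ℝ) ≤ min ((Real.sqrt ε * ‖x‖) ^ b) 1 :=
              le_min (Real.rpow_nonneg (by positivity) b) zero_le_one
            positivity
          · exact gauss_integrable d a ((s ^ H) ^ 2) ha (by positivity)
          · filter_upwards with x
            rw [hsq]
            have h8 : min ((Real.sqrt ε * ‖x‖) ^ b) 1 ≤ 1 := min_le_right _ _
            have h5 : (0:ℝ) ≤ min ((Real.sqrt ε * ‖x‖) ^ b) 1 :=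
              le_min (Real.rpow_nonneg (by positivity) b) zero_le_one
            have hx : (0:ℝ) ≤ ‖x‖ ^ a := Real.rpow_nonneg (norm_nonneg x) a
            have he : (0:ℝ) ≤ Real.exp (-‖x‖ ^ 2 * (s ^ H) ^ 2) := Real.exp_nonneg _
            calc ‖x‖ ^ a * min ((Real.sqrt ε * ‖x‖) ^ b) 1 *
                Real.exp (-‖x‖ ^ 2 * (s ^ H) ^ 2)
                ≤ ‖x‖ ^ a * 1 * Real.exp (-‖x‖ ^ 2 * (s ^ H) ^ 2) := by
                  apply mul_le_mul_of_nonneg_right _ he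
                  exact mul_le_mul_of_nonneg_left h8 hx
              _ = ‖x‖ ^ a * Real.exp (-‖x‖ ^ 2 * (s ^ H) ^ 2) := by ring
        rw [gauss_scaling d a (s ^ H) hR] at step1
        refine step1.trans (le_of_eq ?_)
        have hRa : (s ^ H) ^ a = s ^ (H * a) := by
          rw [← Real.rpow_mul hs0.le]
        have hRd : (s ^ H) ^ d = s ^ (H * d) := by
          rw [← Real.rpow_natCast (s ^ H) d, ← Real.rpow_mul hs0.le]
        rw [hRa, hRd, ← Real.rpow_add hs0, ← Real.rpow_neg hs0.le]
        rw [mul_comm]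
        congr 2
        ring
    refine hbound.trans (le_of_eq ?_)
    rw [MeasureTheory.integral_const_mul]
    congr 1
    rw [← MeasureTheory.integral_Ioc_eq_integral_Ioo, ← intervalIntegral.integral_of_le ht.le,
      integral_rpow (Or.inl (by simp only [hpdef] at hp; nlinarith))]
    rw [Real.zero_rpow (by simp only [hpdef] at hp; intro hcon; nlinarith [hcon] : -(H * (a + d)) + 1 ≠ 0)]
    rw [show -(H * (a + d)) + 1 = p by simp only [hpdef]; ring]
    ring
  have htp : t ^ p ≤ T ^ (p - q) * t ^ q := by
    have heq2 : t ^ p = t ^ (p - q) * t ^ q := by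
      rw [← Real.rpow_add ht]; ring_nf
    rw [heq2]
    exact mul_le_mul_of_nonneg_right (Real.rpow_le_rpow ht.le htT hδ)
      (Real.rpow_nonneg ht.le q)
  have htq : 0 < t ^ q := Real.rpow_pos_of_pos ht q
  calc ε ^ (-((2 * a + d - 1 / H) / 4)) * A ≤ 1 * A :=
        mul_le_mul_of_nonneg_right hεr hA
    _ = A := one_mul _
    _ ≤ I * (t ^ p / p) := key
    _ = I / p * t ^ p := by ring
    _ ≤ I / p * (T ^ (p - q) * t ^ q) :=
        mul_le_mul_of_nonneg_left htp (by positivity)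
    _ ≤ (I / p * T ^ (p - q) + 1) * t ^ q := by nlinarith
end

section
/- Let H ∈ (0,1), d ≥ 1, m ≥ 1, k ≥ 0 and N ≥ 1 with H(2k+d) < 1 − 2NH. Then for every κ > 0 and T > 0, the sum over binary choices (p_j, p̄_j) with p_j + p̄_j = 1, p̄_0 = 0, p_m = 1 of ∏_{j=1}^m ∫_0^T s_j^{−H(k+N)(p̄_{j−1}+p_j) − Hd} ds_j is finite. -/
open MeasureTheory Real Set

/-- Integrability needed in the proof of the `L^p`-convergence theorem: when
`H(2k+d) < 1 - 2NH`, for every admissible binary choice `p` (with `p̄_0 = 0`, `p_m = 1`),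
the product `∏_j ∫_0^T s^{-H(k+N)(p̄_{j-1}+p_j) - Hd} ds` is finite. -/
theorem statement15 (d m : ℕ) (hd : 1 ≤ d) (hm : 1 ≤ m) (H k N T : ℝ)
    (hH : 0 < H) (hH1 : H < 1) (hk : 0 ≤ k) (hN : 1 ≤ N) (hT : 0 < T)
    (hcond : H * (2 * k + d) < 1 - 2 * N * H) :
    ∀ p : Fin (m + 1) → ℕ, (∀ j, p j ≤ 1) → p 0 = 1 → p (Fin.last m) = 1 →
      (∏ j : Fin m, ∫⁻ s in Ioo (0:ℝ) T,
        ENNReal.ofReal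
          (s ^ (-(H * (k + N) * (((1 - p j.castSucc) + p j.succ : ℕ) : ℝ)) - H * d)))
        < ⊤ := by
  intro p hp _ _
  refine ENNReal.prod_lt_top ?_
  intro j _
  set c : ℕ := (1 - p j.castSucc) + p j.succ with hc
  have hc2 : c ≤ 2 := by
    have h1 := hp j.castSucc
    have h2 := hp j.succ
    omega
  have hkN : 0 ≤ H * (k + N) := by positivity
  have hgt : (-1 : ℝ) < -(H * (k + N) * (c : ℝ)) - H * d := by
    have hcr : (c : ℝ) ≤ 2 := by exact_mod_cast hc2
    have : H * (k + N) * (c : ℝ) + H * d ≤ H * (k + N) * 2 + H * d := by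
      nlinarith
    nlinarith
  have hint : IntegrableOn (fun s : ℝ => s ^ (-(H * (k + N) * (c : ℝ)) - H * d))
      (Ioo 0 T) := (intervalIntegral.integrableOn_Ioo_rpow_iff hT).2 hgt
  exact hint.lintegral_lt_top
end
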